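/- arXiv:2303.14290 — 8 statements merged into one kernel-verified Lean document; each statement's English description precedes it below -/
import Mathlib

section
/- Let T be a finite group and S = {t₁, ..., t_k} ⊆ T with t₁ = 1, the elements tᵢ pairwise distinct. Suppose (i) the only automorphism of T fixing {t₂, ..., t_k} setwise is the identity, and (ii) for every i with 2 ≤ i ≤ k, the multiset of element orders {|tᵢ⁻¹t₁|, ..., |tᵢ⁻¹t_k|} differs from the multiset {1, |t₂|, ..., |t_k|}. Then the only element of Hol(T) fixing S setwise is the identity. -/
/-- Lemma on sufficient conditions for a subset `S = {t₁,…,t_k}` of a finite group `T`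
with `t₁ = 1` to have trivial setwise stabiliser in `Hol(T)`: if (i) the only
automorphism of `T` fixing `{t₂,…,t_k}` setwise is the identity, and (ii) for each
`i ≥ 2` the multiset of orders `{|tᵢ⁻¹t₁|,…,|tᵢ⁻¹t_k|}` differs from
`{1,|t₂|,…,|t_k|}`, then any `g·α ∈ Hol(T)` fixing `S` setwise is the identity. -/
theorem stmt3 {T : Type*} [Group T] [Fintype T] {k : ℕ} (hk : 0 < k)
    (t : Fin k → T) (ht : Function.Injective t) (h1 : t ⟨0, hk⟩ = 1)
    (hi : ∀ α : MulAut T, α '' (Set.range t \ {1}) = Set.range t \ {1} → α = 1)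
    (hii : ∀ i : Fin k, i ≠ ⟨0, hk⟩ →
      (Finset.univ.val.map fun j : Fin k => orderOf ((t i)⁻¹ * t j)) ≠
        Finset.univ.val.map fun j : Fin k => orderOf (t j))
    (g : T) (α : MulAut T)
    (h : (fun x => α (g⁻¹ * x)) '' Set.range t = Set.range t) :
    g = 1 ∧ α = 1 := by
  set f : T → T := fun x => α (g⁻¹ * x) with hf
  have finj : Function.Injective f := by
    intro a b hab
    have := α.injective hab
    exact mul_left_cancel this
  -- there is i with f (t i) = 1, i.e. g = t i
  have h1mem : (1 : T) ∈ f '' Set.range t := by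
    rw [h]; exact ⟨⟨0, hk⟩, h1⟩
  obtain ⟨x, ⟨i, rfl⟩, hx⟩ := h1mem
  have hg : g = t i := by
    have : g⁻¹ * t i = 1 := by
      simp only [hf] at hx
      have hx' : α (g⁻¹ * t i) = α 1 := by rw [map_one]; exact hx
      exact α.injective hx'
    have := eq_of_inv_mul_eq_one this
    exact this.symm ▸ rfl
  -- construct the permutation σ
  have hmem : ∀ j : Fin k, ∃ m : Fin k, t m = f (t j) := by
    intro j
    have : f (t j) ∈ f '' Set.range t := ⟨t j, ⟨j, rfl⟩, rfl⟩
    rw [h] at this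
    exact this
  choose σ hσ using hmem
  have hσinj : Function.Injective σ := by
    intro a b hab
    apply ht
    apply finj
    rw [← hσ a, ← hσ b, hab]
  have hσbij : Function.Bijective σ := Finite.injective_iff_bijective.mp hσinj
  let e : Fin k ≃ Fin k := Equiv.ofBijective σ hσbij
  -- multiset equality of orders
  have hmult : (Finset.univ.val.map fun j : Fin k => orderOf ((t i)⁻¹ * t j)) =
      Finset.univ.val.map fun j : Fin k => orderOf (t j) := by
    have hord : ∀ j : Fin k, orderOf ((t i)⁻¹ * t j) = orderOf (t (σ j)) := by
      intro j
      have : t (σ j) = α ((t i)⁻¹ * t j) := by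
        rw [hσ j, hf, hg]
      rw [this]
      exact (orderOf_injective α.toMonoidHom α.injective _).symm
    calc (Finset.univ.val.map fun j : Fin k => orderOf ((t i)⁻¹ * t j))
        = Finset.univ.val.map fun j : Fin k => orderOf (t (σ j)) := by
          simp only [hord]
      _ = (Finset.univ.val.map σ).map fun j : Fin k => orderOf (t j) := by
          rw [Multiset.map_map]; rfl
      _ = Finset.univ.val.map fun j : Fin k => orderOf (t j) := by
          congr 1
          have h2 := congrArg Finset.val (Finset.map_univ_equiv e)
          rw [Finset.map_val] at h2
          exact h2
  -- hence i = 0 and g = 1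
  have hi0 : i = ⟨0, hk⟩ := by
    by_contra hne
    exact hii i hne hmult
  have hg1 : g = 1 := by rw [hg, hi0, h1]
  refine ⟨hg1, ?_⟩
  -- α preserves range t
  have hα : (⇑α) '' Set.range t = Set.range t := by
    have : f = ⇑α := by funext x; simp [hf, hg1]
    rw [← this, h]
  apply hi
  rw [Set.image_diff α.injective, hα]
  congr 1
  simp
end

section
/- Let T be a finite group whose outer automorphism group is trivial (every automorphism is inner) and with trivial center. Let S = {t₁, ..., t_k} ⊆ T with t₁ = 1. Suppose (i) the orders |t₂|, ..., |t_k| are pairwise distinct, (ii) M = ⟨t₂, ..., t_k⟩ is a maximal subgroup of T with trivial center, and (iii) for every 2 ≤ i ≤ k, the multiset {|tᵢ⁻¹t₁|, ..., |tᵢ⁻¹t_k|} differs from {1, |t₂|, ..., |t_k|}. Then the setwise stabiliser of S in Hol(T) is trivial. -/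
/-- If `T` is a finite group with every automorphism inner and trivial centre,
`S = {t₁,…,t_k} ⊆ T` with `t₁ = 1`, the orders `|t₂|,…,|t_k|` pairwise distinct,
`M = ⟨t₂,…,t_k⟩` a maximal subgroup of `T` with trivial centre, and for each `i ≥ 2`
the multiset `{|tᵢ⁻¹t₁|,…,|tᵢ⁻¹t_k|}` differs from `{1,|t₂|,…,|t_k|}`, then the
setwise stabiliser of `S` in `Hol(T)` is trivial. -/
theorem stmt4 {T : Type*} [Group T] [Fintype T]
    (hout : ∀ α : MulAut T, ∃ g : T, α = MulAut.conj g)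
    (hz : Subgroup.center T = ⊥)
    {k : ℕ} (hk : 0 < k) (t : Fin k → T) (ht : Function.Injective t)
    (h1 : t ⟨0, hk⟩ = 1)
    (horders : ∀ i j : Fin k, i ≠ ⟨0, hk⟩ → j ≠ ⟨0, hk⟩ →
      orderOf (t i) = orderOf (t j) → i = j)
    (hmax : IsCoatom (Subgroup.closure (t '' {i | i ≠ ⟨0, hk⟩})))
    (hZM : Subgroup.center ↥(Subgroup.closure (t '' {i | i ≠ ⟨0, hk⟩})) = ⊥)
    (hii : ∀ i : Fin k, i ≠ ⟨0, hk⟩ →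
      (Finset.univ.val.map fun j : Fin k => orderOf ((t i)⁻¹ * t j)) ≠
        Finset.univ.val.map fun j : Fin k => orderOf (t j))
    (g : T) (α : MulAut T)
    (h : (fun x => α (g⁻¹ * x)) '' Set.range t = Set.range t) :
    g = 1 ∧ α = 1 := by
  classical
  set M := Subgroup.closure (t '' {i | i ≠ ⟨0, hk⟩}) with hMdef
  -- Step 1 : g = t m for some m
  have h1mem : (1 : T) ∈ (fun x => α (g⁻¹ * x)) '' Set.range t := by
    rw [h]; exact ⟨⟨0, hk⟩, h1⟩
  obtain ⟨x, ⟨m, rfl⟩, hx⟩ := h1mem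
  have hg : g = t m := by
    have h2 : g⁻¹ * t m = 1 := α.injective (by rw [map_one]; exact hx)
    exact (inv_mul_eq_one.mp h2)
  -- Step 2 : multiset of images equals multiset of t's
  have hs : Finset.univ.val.map (fun j : Fin k => α (g⁻¹ * t j)) = Finset.univ.val.map t := by
    have hinj1 : Function.Injective (fun j : Fin k => α (g⁻¹ * t j)) := by
      intro a b hab
      exact ht (mul_left_cancel (α.injective hab))
    refine (Multiset.Nodup.ext (Finset.univ.nodup.map hinj1)
      (Finset.univ.nodup.map ht)).mpr ?_
    intro a
    simp only [Multiset.mem_map, Finset.mem_val, Finset.mem_univ, true_and]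
    constructor
    · rintro ⟨j, rfl⟩
      have : α (g⁻¹ * t j) ∈ (fun x => α (g⁻¹ * x)) '' Set.range t := ⟨t j, ⟨j, rfl⟩, rfl⟩
      rw [h] at this; exact this
    · rintro ⟨j, rfl⟩
      have : t j ∈ (fun x => α (g⁻¹ * x)) '' Set.range t := by rw [h]; exact ⟨j, rfl⟩
      obtain ⟨y, ⟨i, rfl⟩, hy⟩ := this
      exact ⟨i, hy⟩
  have hA : (Finset.univ.val.map fun j : Fin k => orderOf (g⁻¹ * t j)) =
      Finset.univ.val.map fun j : Fin k => orderOf (t j) := by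
    have e1 : (fun j : Fin k => orderOf (g⁻¹ * t j)) =
        (fun j : Fin k => orderOf (α (g⁻¹ * t j))) := by
      funext j
      exact (orderOf_injective (α : T →* T) α.injective _).symm
    calc (Finset.univ.val.map fun j : Fin k => orderOf (g⁻¹ * t j))
        = (Finset.univ.val.map fun j : Fin k => α (g⁻¹ * t j)).map orderOf := by
          rw [Multiset.map_map, e1]; rfl
      _ = (Finset.univ.val.map t).map orderOf := by rw [hs]
      _ = Finset.univ.val.map fun j : Fin k => orderOf (t j) := by
          rw [Multiset.map_map]; rfl
  -- Step 3 : g = 1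
  have hm0 : m = ⟨0, hk⟩ := by
    by_contra hm
    rw [hg] at hA
    exact hii m hm (by simpa using hA)
  have hg1 : g = 1 := by rw [hg, hm0, h1]
  refine ⟨hg1, ?_⟩
  -- Step 4 : α fixes each t i
  have hα : ∀ i : Fin k, α (t i) = t i := by
    intro i
    by_cases hi : i = ⟨0, hk⟩
    · rw [hi, h1, map_one]
    · have hmem : α (t i) ∈ Set.range t := by
        rw [← h]
        exact ⟨t i, ⟨i, rfl⟩, by rw [hg1]; simp⟩
      obtain ⟨j, hj⟩ := hmem
      have hj0 : j ≠ ⟨0, hk⟩ := by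
        rintro rfl
        rw [h1] at hj
        exact hi (ht (by rw [h1]; exact α.injective (by rw [← hj, map_one])))
      have hord : orderOf (t j) = orderOf (t i) := by
        rw [hj]; exact orderOf_injective (α : T →* T) α.injective _
      rw [← hj, horders j i hj0 hi hord]
  -- α fixes M pointwise
  have hfixM : ∀ x ∈ M, α x = x := by
    intro x hx
    refine Subgroup.closure_induction ?_ (map_one α) ?_ ?_ hx
    · rintro y ⟨i, _, rfl⟩; exact hα i
    · intro a b _ _ ha hb; rw [map_mul, ha, hb]
    · intro a _ ha; rw [map_inv, ha]
  obtain ⟨c, hc⟩ := hout α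
  have hcomm : ∀ x ∈ M, c * x = x * c := by
    intro x hx
    have h3 : c * x * c⁻¹ = x := by
      have := hfixM x hx
      rwa [hc, MulAut.conj_apply] at this
    exact mul_inv_eq_iff_eq_mul.mp h3
  have hc1 : c = 1 := by
    by_cases hcM : c ∈ M
    · have hcen : (⟨c, hcM⟩ : M) ∈ Subgroup.center M := by
        rw [Subgroup.mem_center_iff]
        rintro ⟨y, hy⟩
        exact Subtype.ext (hcomm y hy).symm
      rw [hZM, Subgroup.mem_bot] at hcen
      exact congrArg Subtype.val hcen
    · have hlt : M < M ⊔ Subgroup.closure {c} := by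
        refine lt_of_le_of_ne le_sup_left ?_
        intro hEq
        exact hcM (hEq ▸ Subgroup.mem_sup_right (Subgroup.mem_closure_singleton_self c))
      have htop := hmax.2 _ hlt
      have hle : M ⊔ Subgroup.closure {c} ≤ Subgroup.centralizer {c} := by
        refine sup_le ?_ ?_
        · intro x hx
          rw [Subgroup.mem_centralizer_iff]
          rintro y (rfl : y = c)
          exact hcomm x hx
        · rw [Subgroup.closure_le]
          rintro y (rfl : y = c)
          rw [SetLike.mem_coe, Subgroup.mem_centralizer_iff]
          rintro z (rfl : z = y); rfl
      have hcenT : c ∈ Subgroup.center T := by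
        rw [Subgroup.mem_center_iff]
        intro y
        have hy : y ∈ Subgroup.centralizer {c} := hle (htop ▸ Subgroup.mem_top y)
        exact (Subgroup.mem_centralizer_iff.mp hy c rfl).symm
      rw [hz, Subgroup.mem_bot] at hcenT
      exact hcenT
  rw [hc, hc1, map_one]
end

section
/- For n ≥ 7, the maximum of |C_{A_n}(x)| over all non-identity elements x of S_n equals (n−2)!, attained when x is a transposition. -/
/-!
Let `C = C_{Aₙ}(x)`. If `x` moves a point `a` with `x² a ≠ a`, then the stabilizer of `a` in `C`
fixes `a, x a, x² a` and consists of even permutations, so it embeds in `A_{n-3}`; with an orbit of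
size at most `n` this gives `|C| ≤ n (n-3)!/2 ≤ (n-2)!`. Otherwise `x` swaps some `a` with `x a`,
and unless `x` is a transposition it moves a third point `b`. The stabilizer of `a` sends `b`
outside `{a, x a}`, and the stabilizer of `a` and `b` fixes `a, x a, b, x b`, so
`|C| ≤ n (n-2) (n-4)!/2 ≤ (n-2)!` once `n ≥ 6`. Finally, a transposition `τ` has
`|C_{Sₙ}(τ)| = 2 (n-2)!`, and since `τ` itself is odd, `C_{Aₙ}(τ)` has index `2` in it.
-/

open Equiv Equiv.Perm Subgroup MulAction

section GroupTheory
variable {G : Type*} [Group G]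

lemma Subgroup.relIndex_mul_card_inf (H K : Subgroup G) :
    K.relIndex H * Nat.card (H ⊓ K : Subgroup G) = Nat.card H := by
  rw [← inf_relIndex_left, ← relIndex_bot_left, ← relIndex_bot_left, mul_comm,
    relIndex_mul_relIndex _ _ _ bot_le inf_le_left]

lemma Subgroup.card_le_card_mul_card_inf_stabilizer {X : Type*} [MulAction G X]
    (H : Subgroup G) (x : X) (T : Finset X) (hT : ∀ g ∈ H, g • x ∈ T) :
    Nat.card H ≤ T.card * Nat.card (H ⊓ stabilizer G x : Subgroup G) := by
  have horbit : (orbit H x).ncard ≤ T.card := by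
    rw [← Set.ncard_coe_finset]
    refine Set.ncard_le_ncard ?_ T.finite_toSet
    rintro _ ⟨g, rfl⟩
    exact hT g g.2
  have hindex : (stabilizer G x).relIndex H = (orbit H x).ncard := index_stabilizer H x
  rw [← relIndex_mul_card_inf H (stabilizer G x), hindex]
  exact Nat.mul_le_mul_right _ horbit

lemma MulAction.mem_stabilizer_smul_of_mem_centralizer {X : Type*} [MulAction G X] {g h : G}
    (hg : g ∈ centralizer {h}) {c : X} (hc : g ∈ stabilizer G c) : g ∈ stabilizer G (h • c) := by
  rw [mem_stabilizer_iff, smul_smul, mem_centralizer_singleton_iff.1 hg, mul_smul,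
    mem_stabilizer_iff.1 hc]

end GroupTheory

namespace Equiv.Perm

variable {α : Type*} [Fintype α] [DecidableEq α]

lemma two_mul_card_le_factorial_of_forall_fixed {H : Subgroup (Perm α)}
    (hH : H ≤ alternatingGroup α) (s : Finset α) (hfix : ∀ g ∈ H, ∀ c ∈ s, g c = c)
    (hs : s.card + 2 ≤ Fintype.card α) :
    2 * Nat.card H ≤ (Fintype.card α - s.card).factorial := by
  have hcard : Fintype.card {c // c ∉ s} = Fintype.card α - s.card := by
    simp [Fintype.card_subtype_compl]
  have : Nontrivial {c // c ∉ s} := Fintype.one_lt_card_iff_nontrivial.1 (by omega)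
  have hle : H ≤ (alternatingGroup {c // c ∉ s}).map ofSubtype := by
    intro g hg
    have hmaps : ∀ c, g c ∉ s ↔ c ∉ s := fun c => not_congr
      ⟨fun hgc => g.injective (hfix g hg _ hgc) ▸ hgc, fun hc => (hfix g hg c hc).symm ▸ hc⟩
    have hg' : ofSubtype (p := (· ∉ s)) (g.subtypePerm hmaps) = g :=
      ofSubtype_subtypePerm _ fun c hc hcs => hc (hfix g hg c hcs)
    refine ⟨g.subtypePerm hmaps, ?_, hg'⟩
    rw [SetLike.mem_coe, mem_alternatingGroup, ← sign_ofSubtype, hg']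
    exact hH hg
  calc 2 * Nat.card H ≤ 2 * Nat.card ((alternatingGroup {c // c ∉ s}).map ofSubtype) :=
        Nat.mul_le_mul_left _ (card_le_of_le hle)
    _ = (Fintype.card α - s.card).factorial := by
        rw [card_map_of_injective ofSubtype_injective, Nat.card_eq_fintype_card,
          two_mul_card_alternatingGroup, Fintype.card_perm, hcard]

lemma two_mul_card_inf_alternatingGroup {H : Subgroup (Perm α)} {σ : Perm α}
    (hσ : σ ∈ H) (hodd : sign σ = -1) :
    2 * Nat.card (H ⊓ alternatingGroup α : Subgroup (Perm α)) = Nat.card H := by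
  have hindex : (alternatingGroup α).relIndex H = 2 := by
    refine relIndex_eq_two_iff_exists_notMem_and.2
      ⟨σ, hσ, by simp [mem_alternatingGroup, hodd], fun g _ => ?_⟩
    rcases Int.units_eq_one_or (sign g) with h | h <;> simp [mem_alternatingGroup, h, hodd]
  rw [← hindex, relIndex_mul_card_inf]

lemma nat_card_centralizer_swap {a b : α} (hab : a ≠ b) :
    Nat.card (centralizer {swap a b}) = 2 * (Fintype.card α - 2).factorial := by
  rw [nat_card_centralizer, isSwap_iff_cycleType.1 ⟨a, b, hab, rfl⟩]
  simp [mul_comm]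

lemma card_centralizer_swap_inf_alternatingGroup {a b : α} (hab : a ≠ b) :
    Nat.card (centralizer {swap a b} ⊓ alternatingGroup α : Subgroup (Perm α)) =
      (Fintype.card α - 2).factorial := by
  have h := two_mul_card_inf_alternatingGroup (mem_centralizer_singleton_iff.2 rfl) (sign_swap hab)
  rw [nat_card_centralizer_swap hab] at h
  omega

lemma card_centralizer_inf_alternatingGroup_le_of_apply_apply_ne {x : Perm α} {a : α}
    (ha : x (x a) ≠ a) (hα : 5 ≤ Fintype.card α) :
    Nat.card (centralizer {x} ⊓ alternatingGroup α : Subgroup (Perm α)) ≤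
      (Fintype.card α - 2).factorial := by
  set n := Fintype.card α
  set C : Subgroup (Perm α) := centralizer {x} ⊓ alternatingGroup α
  have hs : ({a, x a, x (x a)} : Finset α).card = 3 := by
    have ha1 : x a ≠ a := fun h => ha (by rw [h, h])
    have ha2 : x (x a) ≠ x a := fun h => ha1 (x.injective h)
    rw [Finset.card_insert_of_notMem (by simp [ha1.symm, ha.symm]),
      Finset.card_pair ha2.symm]
  have horbit : Nat.card C ≤ n * Nat.card (C ⊓ stabilizer (Perm α) a : Subgroup (Perm α)) := by
    simpa only [Finset.card_univ] using
      card_le_card_mul_card_inf_stabilizer C a Finset.univ fun _ _ => Finset.mem_univ _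
  have hstab : 2 * Nat.card (C ⊓ stabilizer (Perm α) a : Subgroup (Perm α)) ≤ (n - 3).factorial := by
    refine hs ▸ two_mul_card_le_factorial_of_forall_fixed
      (inf_le_left.trans inf_le_right) _ ?_ (by omega)
    rintro g ⟨⟨hgx, -⟩, hga⟩ c hc
    have hgxa := mem_stabilizer_smul_of_mem_centralizer hgx hga
    simp only [Finset.mem_insert, Finset.mem_singleton] at hc
    rcases hc with rfl | rfl | rfl
    exacts [hga, hgxa, mem_stabilizer_smul_of_mem_centralizer hgx hgxa]
  have hfact : (n - 2).factorial = (n - 2) * (n - 3).factorial := by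
    rw [show n - 2 = n - 3 + 1 by omega, Nat.factorial_succ]
  calc Nat.card C ≤ n * Nat.card (C ⊓ stabilizer (Perm α) a : Subgroup (Perm α)) := horbit
    _ ≤ (n - 2) * (2 * Nat.card (C ⊓ stabilizer (Perm α) a : Subgroup (Perm α))) := by
        rw [← mul_assoc]
        exact Nat.mul_le_mul_right _ (by omega)
    _ ≤ (n - 2).factorial := by
        rw [hfact]
        gcongr

lemma card_centralizer_inf_alternatingGroup_le_of_apply_apply_eq {x : Perm α} {a b : α}
    (ha : x a ≠ a) (ha2 : x (x a) = a) (hb : x b ≠ b) (hba : b ≠ a) (hbxa : b ≠ x a)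
    (hα : 6 ≤ Fintype.card α) :
    Nat.card (centralizer {x} ⊓ alternatingGroup α : Subgroup (Perm α)) ≤
      (Fintype.card α - 2).factorial := by
  set n := Fintype.card α
  set C : Subgroup (Perm α) := centralizer {x} ⊓ alternatingGroup α
  set Ca : Subgroup (Perm α) := C ⊓ stabilizer (Perm α) a
  set Cab : Subgroup (Perm α) := Ca ⊓ stabilizer (Perm α) b
  have hs : ({a, x a, b, x b} : Finset α).card = 4 := by
    have hxba : x b ≠ a := fun h => hbxa (x.injective (h.trans ha2.symm))
    have hxbxa : x b ≠ x a := fun h => hba (x.injective h)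
    rw [Finset.card_insert_of_notMem (by simp [ha.symm, hba.symm, hxba.symm]),
      Finset.card_insert_of_notMem (by simp [hbxa.symm, hxbxa.symm]), Finset.card_pair hb.symm]
  have horbit_a : Nat.card C ≤ n * Nat.card Ca := by
    simpa only [Finset.card_univ] using
      card_le_card_mul_card_inf_stabilizer C a Finset.univ fun _ _ => Finset.mem_univ _
  -- `g b` cannot be `a = g a` or `x a = g (x a)`.
  have horbit_b : Nat.card Ca ≤ (n - 2) * Nat.card Cab := by
    have hT : ({a, x a}ᶜ : Finset α).card = n - 2 := by
      rw [Finset.card_compl, Finset.card_pair ha.symm]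
    refine hT ▸ card_le_card_mul_card_inf_stabilizer Ca b _ ?_
    rintro g ⟨⟨hgx, -⟩, hga⟩
    have hga : g a = a := hga
    have hgxa : g (x a) = x a := mem_stabilizer_smul_of_mem_centralizer hgx hga
    simp only [Perm.smul_def, Finset.mem_compl, Finset.mem_insert, Finset.mem_singleton, not_or]
    exact ⟨fun h => hba (g.injective (h.trans hga.symm)),
      fun h => hbxa (g.injective (h.trans hgxa.symm))⟩
  have hstab : 2 * Nat.card Cab ≤ (n - 4).factorial := by
    refine hs ▸ two_mul_card_le_factorial_of_forall_fixed
      ((inf_le_left.trans inf_le_left).trans inf_le_right) _ ?_ (by omega)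
    rintro g ⟨⟨⟨hgx, -⟩, hga⟩, hgb⟩ c hc
    simp only [Finset.mem_insert, Finset.mem_singleton] at hc
    rcases hc with rfl | rfl | rfl | rfl
    exacts [hga, mem_stabilizer_smul_of_mem_centralizer hgx hga, hgb,
      mem_stabilizer_smul_of_mem_centralizer hgx hgb]
  have hfact : (n - 2).factorial = (n - 2) * ((n - 3) * (n - 4).factorial) := by
    rw [show n - 2 = n - 4 + 1 + 1 by omega, show n - 3 = n - 4 + 1 by omega,
      Nat.factorial_succ, Nat.factorial_succ]
  calc Nat.card C ≤ n * ((n - 2) * Nat.card Cab) :=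
        horbit_a.trans (Nat.mul_le_mul_left _ horbit_b)
    _ ≤ (n - 2) * ((n - 3) * (2 * Nat.card Cab)) := by
        rw [mul_left_comm, ← mul_assoc (n - 3)]
        exact Nat.mul_le_mul_left _ (Nat.mul_le_mul_right _ (by omega))
    _ ≤ (n - 2).factorial := by
        rw [hfact]
        gcongr

lemma card_centralizer_inf_alternatingGroup_le {x : Perm α} (hx : x ≠ 1)
    (hα : 6 ≤ Fintype.card α) :
    Nat.card (centralizer {x} ⊓ alternatingGroup α : Subgroup (Perm α)) ≤
      (Fintype.card α - 2).factorial := by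
  by_cases hswap : x.IsSwap
  · obtain ⟨a, b, hab, rfl⟩ := hswap
    exact (card_centralizer_swap_inf_alternatingGroup hab).le
  obtain ⟨a, ha⟩ : ∃ a, x a ≠ a := by
    contrapose! hx
    exact Equiv.ext hx
  by_cases ha2 : x (x a) = a
  swap
  · exact card_centralizer_inf_alternatingGroup_le_of_apply_apply_ne ha2 (by omega)
  have hsupport : ({a, x a} : Finset α).card < x.support.card := by
    have h0 : 0 < x.support.card := Finset.card_pos.2 ⟨a, mem_support.2 ha⟩
    have h1 := card_support_ne_one x
    have h2 := mt card_support_eq_two.1 hswap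
    have h3 := Finset.card_le_two (a := a) (b := x a)
    omega
  obtain ⟨b, hb, hbab⟩ := Finset.exists_mem_notMem_of_card_lt_card hsupport
  simp only [Finset.mem_insert, Finset.mem_singleton, not_or] at hbab
  exact card_centralizer_inf_alternatingGroup_le_of_apply_apply_eq ha ha2 (mem_support.1 hb)
    hbab.1 hbab.2 (by omega)

lemma nat_card_commute_eq_card_centralizer_inf (x : Perm α) :
    Nat.card {g : alternatingGroup α // Commute (g : Perm α) x} =
      Nat.card (centralizer {x} ⊓ alternatingGroup α : Subgroup (Perm α)) :=
  Nat.card_congr <| (subtypeSubtypeEquivSubtypeInter (· ∈ alternatingGroup α) (Commute · x)).trans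
    (subtypeEquivRight fun g => by rw [mem_inf, mem_centralizer_singleton_iff, and_comm]; rfl)

end Equiv.Perm

/-- For `n ≥ 7`, the maximum of `|C_{Aₙ}(x)|` over non-identity `x ∈ Sₙ` is `(n-2)!`,
attained when `x` is a transposition. -/
theorem stmt5 (n : ℕ) (hn : 7 ≤ n) :
    IsGreatest {c : ℕ | ∃ x : Equiv.Perm (Fin n), x ≠ 1 ∧
        c = Nat.card {g : alternatingGroup (Fin n) // Commute (g : Equiv.Perm (Fin n)) x}}
      (n - 2).factorial ∧
    ∃ x : Equiv.Perm (Fin n), x.IsSwap ∧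
      Nat.card {g : alternatingGroup (Fin n) // Commute (g : Equiv.Perm (Fin n)) x} =
        (n - 2).factorial := by
  have hab : (⟨0, by omega⟩ : Fin n) ≠ ⟨1, by omega⟩ := by simp
  have hswap := card_centralizer_swap_inf_alternatingGroup hab
  rw [Fintype.card_fin, ← nat_card_commute_eq_card_centralizer_inf] at hswap
  refine ⟨⟨⟨_, mt swap_eq_one_iff.1 hab, hswap.symm⟩, ?_⟩, _, ⟨_, _, hab, rfl⟩, hswap⟩
  rintro c ⟨x, hx, rfl⟩
  rw [nat_card_commute_eq_card_centralizer_inf]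
  simpa using card_centralizer_inf_alternatingGroup_le hx (by rw [Fintype.card_fin]; omega)
end

section
/- Let ℓ, m, n be positive integers with n > m. Then e^{−1/(8ℓ)}·a < C(nℓ, mℓ) < a, where a = (1/√(2π))·ℓ^{−1/2}·(n/((n−m)m))^{1/2}·(n^n/((n−m)^{n−m} m^m))^ℓ and C denotes the binomial coefficient. -/
/-!
Write `k = n - m` and express each factorial in `C(nℓ, mℓ) = (nℓ)! / ((mℓ)! (kℓ)!)` through
the Stirling sequence `s j = j! / (√(2j) (j/e)^j)`. The main factors combine exactly into
`a / √π`, so `C(nℓ, mℓ) = a · s(nℓ) √π / (s(mℓ) s(kℓ))`, and it remains to show that the last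
factor lies in `(e^{-1/(8ℓ)}, 1)`.

Telescoping the series `log s j - log s (j+1) = ∑_{i ≥ 1} y^{-2i}/(2i+1)`, `y = 2j+1`, against
`stirlingCorrection c j = 1/(12j) - c/(2j+1)^3` gives
`stirlingCorrection (7/80) j ≤ log (s j / √π) ≤ stirlingCorrection (1/45) j`,
and the two claims become elementary inequalities between these corrections. The cubic terms
cannot be dropped: for `n = 2`, `m = 1` the terms `1/(12j)` alone give exactly `1/(8ℓ)`.
-/

open Stirling Real Filter Topology

lemma stirlingSeq_pos {n : ℕ} (hn : n ≠ 0) : 0 < stirlingSeq n :=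
  (sqrt_pos.2 pi_pos).trans_le (sqrt_pi_le_stirlingSeq hn)

lemma factorial_eq_stirlingSeq_mul {j : ℕ} (hj : j ≠ 0) :
    (j.factorial : ℝ) = stirlingSeq j * (√(2 * j) * (j / exp 1) ^ j) := by
  rw [stirlingSeq, div_mul_cancel₀]
  positivity

lemma log_stirlingSeq_sdiff_hasSum_inv_sq {n : ℕ} {y : ℝ} (hy : y = 2 * n + 3) :
    HasSum (fun k : ℕ => 1 / (2 * (k + 1 : ℝ) + 1) * (y⁻¹ ^ 2) ^ (k + 1))
      (log (stirlingSeq (n + 1)) - log (stirlingSeq (n + 2))) := by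
  convert log_stirlingSeq_sdiff_hasSum n using 4 with k
  · push_cast; rfl
  · rw [hy]; push_cast; ring

lemma inv_sq_le_log_stirlingSeq_sdiff {n : ℕ} {y : ℝ} (hy : y = 2 * n + 3) :
    1 / (3 * y ^ 2) + 1 / (5 * y ^ 4) ≤ log (stirlingSeq (n + 1)) - log (stirlingSeq (n + 2)) := by
  refine le_of_eq_of_le ?_ <| sum_le_hasSum (Finset.range 2) (fun k _ => by positivity)
    (log_stirlingSeq_sdiff_hasSum_inv_sq hy)
  simp only [Finset.sum_range_succ, Finset.sum_range_zero]
  norm_num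
  field_simp

lemma log_stirlingSeq_sdiff_le_inv_sq {n : ℕ} {y : ℝ} (hy : y = 2 * n + 3) :
    log (stirlingSeq (n + 1)) - log (stirlingSeq (n + 2)) ≤
      1 / (3 * y ^ 2) + 1 / (5 * (y ^ 2 * (y ^ 2 - 1))) := by
  have hy3 : 3 ≤ y := by rw [hy]; linarith [(n.cast_nonneg : (0 : ℝ) ≤ n)]
  have hq : y⁻¹ ^ 2 < 1 := by
    rw [inv_pow]; exact inv_lt_one_of_one_lt₀ (by nlinarith)
  have hterm (k : ℕ) : 1 / (2 * (↑(k + 1) + 1) + 1) * (y⁻¹ ^ 2) ^ (k + 1 + 1) ≤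
      y⁻¹ ^ 4 / 5 * (y⁻¹ ^ 2) ^ k := by
    have : (1 : ℝ) / (2 * (↑(k + 1) + 1) + 1) ≤ 1 / 5 := by
      gcongr; push_cast; linarith [(k.cast_nonneg : (0 : ℝ) ≤ k)]
    calc _ ≤ 1 / 5 * (y⁻¹ ^ 2) ^ (k + 1 + 1) := by gcongr
      _ = _ := by ring
  have h := hasSum_le hterm ((hasSum_nat_add_iff' 1).2 (log_stirlingSeq_sdiff_hasSum_inv_sq hy))
    ((hasSum_geometric_of_lt_one (by positivity) hq).mul_left (y⁻¹ ^ 4 / 5))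
  have hy2 : y ^ 2 - 1 ≠ 0 := by nlinarith
  have hhead : ∑ i ∈ Finset.range 1, 1 / (2 * (i + 1 : ℝ) + 1) * (y⁻¹ ^ 2) ^ (i + 1) =
      1 / (3 * y ^ 2) := by
    norm_num; field_simp
  have hsum : y⁻¹ ^ 4 / 5 * (1 - y⁻¹ ^ 2)⁻¹ = 1 / (5 * (y ^ 2 * (y ^ 2 - 1))) := by
    field_simp
  linarith

/-- `c = 1/45` gives `1/(12x) - 1/(360 (x + 1/2)^3)`, Stirling's series `1/(12x) - 1/(360x^3)`
with the cubic term shifted to `x + 1/2`; `c = 7/80` is a cruder constant that still makes the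
telescoping step for the lower bound work. -/
noncomputable def stirlingCorrection (c x : ℝ) : ℝ := 1 / (12 * x) - c / (2 * x + 1) ^ 3

lemma stirlingCorrection_sub_succ (c : ℝ) {x : ℝ} (hx : 0 < x) :
    stirlingCorrection c x - stirlingCorrection c (x + 1) =
      1 / (3 * ((2 * x + 1) ^ 2 - 1)) - c * (1 / (2 * x + 1) ^ 3 - 1 / (2 * x + 1 + 2) ^ 3) := by
  have : (2 * x + 1) ^ 2 - 1 = 4 * x * (x + 1) := by ring
  rw [this]
  unfold stirlingCorrection
  field_simp
  ring

lemma tendsto_stirlingCorrection (c : ℝ) :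
    Tendsto (fun n : ℕ => stirlingCorrection c n) atTop (𝓝 0) := by
  have h : Tendsto (fun n : ℕ => (n : ℝ)) atTop atTop := tendsto_natCast_atTop_atTop
  have h12 : Tendsto (fun n : ℕ => 12 * (n : ℝ)) atTop atTop := h.const_mul_atTop (by norm_num)
  have hcube : Tendsto (fun n : ℕ => (2 * (n : ℝ) + 1) ^ 3) atTop atTop :=
    (tendsto_pow_atTop (by norm_num)).comp
      ((h.const_mul_atTop (by norm_num)).atTop_add tendsto_const_nhds)
  simpa [stirlingCorrection] using
    ((tendsto_const_nhds (x := 1)).div_atTop h12).sub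
      ((tendsto_const_nhds (x := c)).div_atTop hcube)

lemma log_stirlingSeq_sdiff_le_stirlingCorrection_sdiff (n : ℕ) :
    log (stirlingSeq (n + 1)) - log (stirlingSeq (n + 2)) ≤
      stirlingCorrection (1 / 45) (n + 1) - stirlingCorrection (1 / 45) (n + 1 + 1) := by
  set y : ℝ := 2 * n + 3 with hy
  have hy3 : 3 ≤ y := by linarith [(n.cast_nonneg : (0 : ℝ) ≤ n)]
  have hy1 : 0 < y ^ 2 - 1 := by nlinarith
  have hy0 : 0 < y := by linarith
  rw [stirlingCorrection_sub_succ _ (by positivity), show 2 * ((n : ℝ) + 1) + 1 = y by ring]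
  have key : 1 / (3 * (y ^ 2 - 1)) - 1 / 45 * (1 / y ^ 3 - 1 / (y + 2) ^ 3) -
      (1 / (3 * y ^ 2) + 1 / (5 * (y ^ 2 * (y ^ 2 - 1)))) =
      (24 * y ^ 3 + 70 * y ^ 2 + 60 * y + 8) / (45 * y ^ 3 * (y + 2) ^ 3 * (y ^ 2 - 1)) := by
    field_simp
    ring
  have : 0 ≤ (24 * y ^ 3 + 70 * y ^ 2 + 60 * y + 8) / (45 * y ^ 3 * (y + 2) ^ 3 * (y ^ 2 - 1)) := by
    positivity
  linarith [log_stirlingSeq_sdiff_le_inv_sq hy]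

lemma stirlingCorrection_sdiff_le_log_stirlingSeq_sdiff (n : ℕ) :
    stirlingCorrection (7 / 80) (n + 1) - stirlingCorrection (7 / 80) (n + 1 + 1) ≤
      log (stirlingSeq (n + 1)) - log (stirlingSeq (n + 2)) := by
  set y : ℝ := 2 * n + 3 with hy
  have hy3 : 3 ≤ y := by linarith [(n.cast_nonneg : (0 : ℝ) ≤ n)]
  have hy1 : 0 < y ^ 2 - 1 := by nlinarith
  have hy0 : 0 < y := by linarith
  rw [stirlingCorrection_sub_succ _ (by positivity), show 2 * ((n : ℝ) + 1) + 1 = y by ring]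
  have key : 1 / (3 * y ^ 2) + 1 / (5 * y ^ 4) -
      (1 / (3 * (y ^ 2 - 1)) - 7 / 80 * (1 / y ^ 3 - 1 / (y + 2) ^ 3)) =
      (94 * y ^ 5 + 60 * y ^ 4 - 390 * y ^ 3 - 796 * y ^ 2 - 744 * y - 384) /
        (240 * y ^ 4 * (y + 2) ^ 3 * (y ^ 2 - 1)) := by
    field_simp
    ring
  have : 0 ≤ (94 * y ^ 5 + 60 * y ^ 4 - 390 * y ^ 3 - 796 * y ^ 2 - 744 * y - 384) /
      (240 * y ^ 4 * (y + 2) ^ 3 * (y ^ 2 - 1)) := by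
    apply div_nonneg _ (by positivity)
    nlinarith [pow_le_pow_left₀ (by norm_num) hy3 2, pow_le_pow_left₀ (by norm_num) hy3 3,
      pow_le_pow_left₀ (by norm_num) hy3 4,
      mul_le_mul_of_nonneg_left hy3 (by positivity : 0 ≤ y ^ 4)]
  linarith [inv_sq_le_log_stirlingSeq_sdiff hy]

lemma sub_le_of_tendsto_of_sdiff_le {u g : ℕ → ℝ} {L : ℝ} (hu : Tendsto u atTop (𝓝 L))
    (hg : Tendsto g atTop (𝓝 0)) (h : ∀ n, u n - u (n + 1) ≤ g n - g (n + 1)) (n : ℕ) :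
    u n - L ≤ g n := by
  have hanti : Antitone (g - u) := antitone_nat_of_succ_le fun n => by
    simp only [Pi.sub_apply]; linarith [h n]
  have := hanti.le_of_tendsto (by simpa using hg.sub hu : Tendsto (fun n => g n - u n) atTop _) n
  simp only [Pi.sub_apply] at this
  linarith

lemma le_sub_of_tendsto_of_sdiff_le {u g : ℕ → ℝ} {L : ℝ} (hu : Tendsto u atTop (𝓝 L))
    (hg : Tendsto g atTop (𝓝 0)) (h : ∀ n, g n - g (n + 1) ≤ u n - u (n + 1)) (n : ℕ) :
    g n ≤ u n - L := by
  have := sub_le_of_tendsto_of_sdiff_le hu.neg (by simpa using hg.neg)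
    (fun n => by linarith [h n]) n
  linarith

lemma tendsto_log_stirlingSeq_succ :
    Tendsto (fun n : ℕ => log (stirlingSeq (n + 1))) atTop (𝓝 (log √π)) :=
  (tendsto_stirlingSeq_sqrt_pi.comp (tendsto_add_atTop_nat 1)).log (by positivity)

lemma tendsto_stirlingCorrection_succ (c : ℝ) :
    Tendsto (fun n : ℕ => stirlingCorrection c (n + 1)) atTop (𝓝 0) := by
  simpa [Function.comp_def] using (tendsto_stirlingCorrection c).comp (tendsto_add_atTop_nat 1)

lemma log_stirlingSeq_sub_log_sqrt_pi_le {j : ℕ} (hj : j ≠ 0) :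
    log (stirlingSeq j) - log √π ≤ stirlingCorrection (1 / 45) j := by
  obtain ⟨n, rfl⟩ := Nat.exists_eq_succ_of_ne_zero hj
  simpa using sub_le_of_tendsto_of_sdiff_le tendsto_log_stirlingSeq_succ
    (tendsto_stirlingCorrection_succ _)
    (fun n => by simpa using log_stirlingSeq_sdiff_le_stirlingCorrection_sdiff n) n

lemma stirlingCorrection_le_log_stirlingSeq_sub {j : ℕ} (hj : j ≠ 0) :
    stirlingCorrection (7 / 80) j ≤ log (stirlingSeq j) - log √π := by
  obtain ⟨n, rfl⟩ := Nat.exists_eq_succ_of_ne_zero hj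
  simpa using le_sub_of_tendsto_of_sdiff_le tendsto_log_stirlingSeq_succ
    (tendsto_stirlingCorrection_succ _)
    (fun n => by simpa using stirlingCorrection_sdiff_le_log_stirlingSeq_sdiff n) n

lemma stirlingCorrection_add_lt_add {a b : ℝ} (ha : 1 ≤ a) (hb : 1 ≤ b) :
    stirlingCorrection (1 / 45) (a + b) <
      stirlingCorrection (7 / 80) a + stirlingCorrection (7 / 80) b := by
  unfold stirlingCorrection
  have hχb : 7 / 80 / (2 * b + 1) ^ 3 < 1 / (12 * b) := by
    rw [div_lt_div_iff₀ (by positivity) (by positivity)]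
    nlinarith [pow_le_pow_left₀ (by norm_num) hb 2, pow_le_pow_left₀ (by norm_num) hb 3]
  have ha_gap : 7 / 80 / (2 * a + 1) ^ 3 ≤ 1 / (12 * a) - 1 / (12 * (a + b)) := by
    have : 1 / (12 * a) - 1 / (12 * (a + b)) = b / (12 * a * (a + b)) := by
      field_simp; ring
    rw [this, div_le_div_iff₀ (by positivity) (by positivity)]
    nlinarith [mul_le_mul_of_nonneg_left hb (by positivity : (0:ℝ) ≤ a * (2 * a + 1) ^ 3),
      pow_le_pow_left₀ (by norm_num) ha 2, pow_le_pow_left₀ (by norm_num) ha 3]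
  have : 0 < 1 / 45 / (2 * (a + b) + 1) ^ 3 := by positivity
  linarith

lemma stirlingCorrection_add_sub_lt {a b : ℝ} (ha : 1 ≤ a) (hab : a ≤ b) :
    stirlingCorrection (1 / 45) a + stirlingCorrection (1 / 45) b -
      stirlingCorrection (7 / 80) (a + b) < 1 / (8 * a) := by
  unfold stirlingCorrection
  have hb : 0 < b := by linarith
  have hmain : 1 / (12 * a) + 1 / (12 * b) - 1 / (12 * (a + b)) ≤ 1 / (8 * a) := by
    have : 1 / (8 * a) - (1 / (12 * a) + 1 / (12 * b) - 1 / (12 * (a + b))) =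
        (b - a) * (b + 2 * a) / (24 * a * b * (a + b)) := by
      field_simp; ring
    have : 0 ≤ (b - a) * (b + 2 * a) / (24 * a * b * (a + b)) := by
      apply div_nonneg _ (by positivity); nlinarith
    linarith
  have hcube : 7 / 80 / (2 * (a + b) + 1) ^ 3 ≤ 1 / 45 / (2 * a + 1) ^ 3 := by
    have h53 : 5 * (2 * a + 1) ≤ 3 * (2 * (a + b) + 1) := by linarith
    have := pow_le_pow_left₀ (by positivity) h53 3
    rw [div_le_div_iff₀ (by positivity) (by positivity)]
    nlinarith [pow_pos (by positivity : (0:ℝ) < 2 * a + 1) 3]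
  have : 0 < 1 / 45 / (2 * b + 1) ^ 3 := by positivity
  linarith

lemma stirlingSeq_add_mul_sqrt_pi_div_lt_one {a b : ℕ} (ha : a ≠ 0) (hb : b ≠ 0) :
    stirlingSeq (a + b) * √π / (stirlingSeq a * stirlingSeq b) < 1 := by
  have hab : a + b ≠ 0 := by omega
  have := stirlingSeq_pos ha
  have := stirlingSeq_pos hb
  have := stirlingSeq_pos hab
  rw [div_lt_one (by positivity), ← log_lt_log_iff (by positivity) (by positivity),
    log_mul (by positivity) (by positivity), log_mul (by positivity) (by positivity)]
  have hcorr := stirlingCorrection_add_lt_add (Nat.one_le_cast.2 (Nat.pos_of_ne_zero ha))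
    (Nat.one_le_cast.2 (Nat.pos_of_ne_zero hb))
  have hsum := log_stirlingSeq_sub_log_sqrt_pi_le hab
  push_cast at hsum
  linarith [stirlingCorrection_le_log_stirlingSeq_sub ha,
    stirlingCorrection_le_log_stirlingSeq_sub hb]

lemma exp_lt_stirlingSeq_add_mul_sqrt_pi_div {a b : ℕ} {t : ℝ} (ht : 0 < t) (ha : t ≤ a)
    (hb : t ≤ b) :
    exp (-1 / (8 * t)) < stirlingSeq (a + b) * √π / (stirlingSeq a * stirlingSeq b) := by
  wlog hab : a ≤ b generalizing a b
  · rw [add_comm, mul_comm (stirlingSeq a)]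
    exact this hb ha (le_of_not_ge hab)
  have ha0 : a ≠ 0 := by rintro rfl; simp at ha; linarith
  have hb0 : b ≠ 0 := by omega
  have hab0 : a + b ≠ 0 := by omega
  have := stirlingSeq_pos ha0
  have := stirlingSeq_pos hb0
  have := stirlingSeq_pos hab0
  rw [lt_div_iff₀ (by positivity), ← log_lt_log_iff (by positivity) (by positivity),
    log_mul (by positivity) (by positivity), log_mul (by positivity) (by positivity),
    log_mul (by positivity) (by positivity), log_exp]
  have hcorr := stirlingCorrection_add_sub_lt (Nat.one_le_cast.2 (Nat.pos_of_ne_zero ha0))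
    (Nat.cast_le.2 hab : (a : ℝ) ≤ b)
  have ht8 : 1 / (8 * (a : ℝ)) ≤ 1 / (8 * t) := by gcongr
  have hsum := stirlingCorrection_le_log_stirlingSeq_sub hab0
  push_cast at hsum
  have : -1 / (8 * t) = -(1 / (8 * t)) := by ring
  linarith [log_stirlingSeq_sub_log_sqrt_pi_le ha0, log_stirlingSeq_sub_log_sqrt_pi_le hb0]

lemma choose_add_eq_stirlingSeq {a b : ℕ} (ha : a ≠ 0) (hb : b ≠ 0) :
    ((a + b).choose a : ℝ) = stirlingSeq (a + b) / (stirlingSeq a * stirlingSeq b) *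
      √((a + b) / (2 * a * b)) * ((a + b) ^ (a + b) / (a ^ a * b ^ b)) := by
  have hab : a + b ≠ 0 := by omega
  have hsqrt : √(2 * (a + b : ℝ)) = √(2 * a) * √(2 * b) * √((a + b) / (2 * a * b)) := by
    rw [← sqrt_mul (by positivity), ← sqrt_mul (by positivity)]
    congr 1
    field_simp
  rw [Nat.cast_choose ℝ (Nat.le_add_right a b), add_tsub_cancel_left,
    factorial_eq_stirlingSeq_mul hab, factorial_eq_stirlingSeq_mul ha,
    factorial_eq_stirlingSeq_mul hb]
  push_cast
  rw [hsqrt, div_pow, div_pow, div_pow, pow_add (exp 1)]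
  have := stirlingSeq_pos ha
  have := stirlingSeq_pos hb
  field_simp

lemma choose_mul_eq_stirlingSeq {ℓ m k : ℕ} (hℓ : ℓ ≠ 0) (hm : m ≠ 0) (hk : k ≠ 0) :
    (((m + k) * ℓ).choose (m * ℓ) : ℝ) =
      stirlingSeq (m * ℓ + k * ℓ) * √π / (stirlingSeq (m * ℓ) * stirlingSeq (k * ℓ)) *
        ((√(2 * π))⁻¹ * (√(ℓ : ℝ))⁻¹ * √(((m + k : ℕ) : ℝ) / ((k : ℝ) * m)) *
          (((m + k : ℕ) : ℝ) ^ (m + k) / ((k : ℝ) ^ k * (m : ℝ) ^ m)) ^ ℓ) := by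
  rw [add_mul, choose_add_eq_stirlingSeq (by positivity) (by positivity)]
  have hsqrt : √(((m * ℓ : ℕ) + (k * ℓ : ℕ)) / (2 * (m * ℓ : ℕ) * (k * ℓ : ℕ)) : ℝ) =
      √π * ((√(2 * π))⁻¹ * (√(ℓ : ℝ))⁻¹ * √(((m + k : ℕ) : ℝ) / ((k : ℝ) * m))) := by
    rw [← sqrt_inv, ← sqrt_inv, ← sqrt_mul (by positivity), ← sqrt_mul (by positivity),
      ← sqrt_mul (by positivity)]
    congr 1
    push_cast
    field_simp
  have hpow : ((((m * ℓ : ℕ) + (k * ℓ : ℕ)) : ℝ) ^ (m * ℓ + k * ℓ) /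
      (((m * ℓ : ℕ) : ℝ) ^ (m * ℓ) * ((k * ℓ : ℕ) : ℝ) ^ (k * ℓ))) =
      (((m + k : ℕ) : ℝ) ^ (m + k) / ((k : ℝ) ^ k * (m : ℝ) ^ m)) ^ ℓ := by
    push_cast
    rw [← add_mul, mul_pow, mul_pow, mul_pow, pow_add (ℓ : ℝ), ← add_mul, div_pow, mul_pow,
      ← pow_mul, ← pow_mul, ← pow_mul]
    field_simp
  rw [hsqrt, hpow]
  ring

/-- Stirling-type two-sided bound: for positive integers `ℓ, m, n` with `n > m`,
`e^{-1/(8ℓ)}·a < C(nℓ, mℓ) < a`, where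
`a = (2π)^{-1/2}·ℓ^{-1/2}·(n/((n-m)m))^{1/2}·(nⁿ/((n-m)^{n-m}·mᵐ))^ℓ`. -/
theorem stmt6 (ℓ m n : ℕ) (hℓ : 0 < ℓ) (hm : 0 < m) (hmn : m < n) :
    Real.exp (-1 / (8 * (ℓ : ℝ))) *
        ((Real.sqrt (2 * Real.pi))⁻¹ * (Real.sqrt (ℓ : ℝ))⁻¹ *
          Real.sqrt ((n : ℝ) / (((n - m : ℕ) : ℝ) * (m : ℝ))) *
          ((n : ℝ) ^ n / (((n - m : ℕ) : ℝ) ^ (n - m) * (m : ℝ) ^ m)) ^ ℓ) <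
      ((n * ℓ).choose (m * ℓ) : ℝ) ∧
    ((n * ℓ).choose (m * ℓ) : ℝ) <
      (Real.sqrt (2 * Real.pi))⁻¹ * (Real.sqrt (ℓ : ℝ))⁻¹ *
        Real.sqrt ((n : ℝ) / (((n - m : ℕ) : ℝ) * (m : ℝ))) *
        ((n : ℝ) ^ n / (((n - m : ℕ) : ℝ) ^ (n - m) * (m : ℝ) ^ m)) ^ ℓ := by
  obtain ⟨k, hk, rfl⟩ : ∃ k, 0 < k ∧ n = m + k := ⟨n - m, by omega, by omega⟩
  rw [Nat.add_sub_cancel_left, choose_mul_eq_stirlingSeq hℓ.ne' hm.ne' hk.ne']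
  set A := (√(2 * π))⁻¹ * (√(ℓ : ℝ))⁻¹ * √(((m + k : ℕ) : ℝ) / ((k : ℝ) * m)) *
    (((m + k : ℕ) : ℝ) ^ (m + k) / ((k : ℝ) ^ k * (m : ℝ) ^ m)) ^ ℓ
  have hA : 0 < A := by positivity
  have hℓm : (ℓ : ℝ) ≤ (m * ℓ : ℕ) := by exact_mod_cast Nat.le_mul_of_pos_left ℓ hm
  have hℓk : (ℓ : ℝ) ≤ (k * ℓ : ℕ) := by exact_mod_cast Nat.le_mul_of_pos_left ℓ hk
  constructor
  · exact mul_lt_mul_of_pos_right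
      (exp_lt_stirlingSeq_add_mul_sqrt_pi_div (by positivity) hℓm hℓk) hA
  · simpa using mul_lt_mul_of_pos_right
      (stirlingSeq_add_mul_sqrt_pi_div_lt_one (by positivity) (by positivity)) hA
end

section
/- Let n, m, t be positive integers with n = t·m and t ≥ 2. Then e^{−1/8}·(t²/((t−1)n))^{1/2}·(t^t/(t−1)^{t−1})^{n/t} < √(2π)·C(n, m) < (t²/((t−1)n))^{1/2}·(t^t/(t−1)^{t−1})^{n/t}. -/
open Real Filter Stirling Topology

private lemma sqrtPi_lt_stirlingSeq' (n : ℕ) : √π < stirlingSeq (n+1) := by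
  have htend : Tendsto (fun N => stirlingSeq (N + 1)) atTop (𝓝 (√π)) :=
    tendsto_stirlingSeq_sqrt_pi.comp (tendsto_add_atTop_nat 1)
  have h2 : √π ≤ stirlingSeq (n+2) := stirlingSeq'_antitone.le_of_tendsto htend (n+1)
  have hdiff : 0 < log (stirlingSeq (n+1)) - log (stirlingSeq (n+2)) := by
    have hs := log_stirlingSeq_diff_hasSum n
    have := le_hasSum hs 0 (fun i _ => by positivity)
    refine lt_of_lt_of_le ?_ this
    push_cast
    positivity
  have h3 : log (√π) < log (stirlingSeq (n+1)) := by
    have h4 : log (stirlingSeq (n+2)) < log (stirlingSeq (n+1)) := by linarith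
    calc log (√π) ≤ log (stirlingSeq (n+2)) :=
          Real.log_le_log (Real.sqrt_pos.mpr pi_pos) h2
      _ < _ := h4
  have := Real.exp_lt_exp.mpr h3
  rwa [Real.exp_log (Real.sqrt_pos.mpr pi_pos), Real.exp_log (stirlingSeq'_pos n)] at this

private lemma stirling_diff_le' (k : ℕ) : log (stirlingSeq (k+1)) - log (stirlingSeq (k+2)) ≤
    1 / (12 * ((k:ℝ) + 1)) - 1 / (12 * ((k:ℝ) + 2)) := by
  set q : ℝ := (1 / (2 * ((k:ℝ) + 1) + 1)) with hq
  have hq0 : (0:ℝ) ≤ q ^ 2 := sq_nonneg _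
  have hq1 : q ^ 2 < 1 := by
    rw [hq, div_pow, one_pow, div_lt_one (by positivity)]
    nlinarith [Nat.cast_nonneg (α := ℝ) k]
  have hgeo : HasSum (fun j : ℕ => (1/3 : ℝ) * (q ^ 2) ^ (j+1))
      (1/3 * (q ^ 2 / (1 - q ^ 2))) := by
    have h := (hasSum_geometric_of_lt_one hq0 hq1).mul_left ((1/3 : ℝ) * q ^ 2)
    simpa [pow_succ', div_eq_mul_inv, mul_assoc] using h
  have hterm : ∀ j : ℕ, (1 : ℝ) / (2 * ((j:ℕ)+1 : ℕ) + 1) * ((1 / (2 * (((k:ℕ)+1 : ℕ) : ℝ) + 1)) ^ 2) ^ ((j:ℕ)+1) ≤ (1/3 : ℝ) * (q ^ 2) ^ (j+1) := by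
    intro j
    have h1 : ((1 / (2 * (((k:ℕ)+1 : ℕ) : ℝ) + 1)) ^ 2) ^ (j+1) = (q ^ 2) ^ (j+1) := by
      push_cast [hq]; ring
    rw [h1]
    apply mul_le_mul_of_nonneg_right _ (pow_nonneg hq0 _)
    rw [div_le_div_iff₀ (by positivity) (by norm_num)]
    push_cast
    nlinarith [Nat.cast_nonneg (α := ℝ) j]
  have hle : log (stirlingSeq (k+1)) - log (stirlingSeq (k+2)) ≤ 1/3 * (q ^ 2 / (1 - q ^ 2)) :=
    hasSum_le hterm (log_stirlingSeq_diff_hasSum k) hgeo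
  refine hle.trans (le_of_eq ?_)
  have hk : (0:ℝ) ≤ (k:ℝ) := Nat.cast_nonneg k
  have hA : ((2*((k:ℝ)+1)+1)^2) ≠ 0 := by positivity
  have hk1 : ((k:ℝ)+1) ≠ 0 := by positivity
  have hk2 : ((k:ℝ)+2) ≠ 0 := by positivity
  have e1 : q ^ 2 = 1 / (2*((k:ℝ)+1)+1)^2 := by rw [hq, div_pow, one_pow]
  have e2 : 1 - q^2 = (4*((k:ℝ)+1)*((k:ℝ)+2)) / (2*((k:ℝ)+1)+1)^2 := by
    rw [e1]; field_simp; ring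
  have e3 : q^2/(1-q^2) = 1/(4*((k:ℝ)+1)*((k:ℝ)+2)) := by
    rw [e2, e1]
    rw [div_div_div_cancel_right₀]
    exact hA
  rw [e3]
  field_simp
  ring

private lemma log_stirling_le' (n : ℕ) :
    log (stirlingSeq (n+1)) ≤ log (√π) + 1 / (12 * ((n:ℝ) + 1)) := by
  have key : ∀ N : ℕ, log (stirlingSeq (n+1)) ≤
      log (stirlingSeq (n+1+N)) + (1 / (12 * ((n:ℝ)+1)) - 1 / (12 * ((n:ℝ)+1+(N:ℝ)))) := by
    intro N
    induction N with
    | zero => simp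
    | succ N ih =>
      have hd := stirling_diff_le' (n+N)
      push_cast at hd ih ⊢
      have e1 : n+1+N = (n+N)+1 := by omega
      have e2 : n+1+(N+1) = (n+N)+2 := by omega
      rw [e1] at ih
      rw [e2]
      ring_nf at hd ih ⊢
      linarith
  have hb : ∀ N : ℕ, log (stirlingSeq (n+1)) ≤
      log (stirlingSeq (N+(n+1))) + 1 / (12 * ((n:ℝ)+1)) := by
    intro N
    have h1 := key N
    have e1 : n+1+N = N+(n+1) := by omega
    rw [e1] at h1
    have h2 : (0:ℝ) < 1 / (12 * ((n:ℝ)+1+(N:ℝ))) := by positivity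
    linarith
  have htend : Tendsto (fun N : ℕ => log (stirlingSeq (N+(n+1))) + 1 / (12 * ((n:ℝ)+1)))
      atTop (𝓝 (log (√π) + 1 / (12 * ((n:ℝ)+1)))) := by
    have h1 : Tendsto (fun N : ℕ => stirlingSeq (N+(n+1))) atTop (𝓝 (√π)) :=
      tendsto_stirlingSeq_sqrt_pi.comp (tendsto_add_atTop_nat (n+1))
    exact ((Real.continuousAt_log (ne_of_gt (Real.sqrt_pos.mpr pi_pos))).tendsto.comp h1).add_const _
  exact ge_of_tendsto' htend hb

private lemma stirlingSeq_two' : stirlingSeq 2 = exp 1 ^ 2 / 4 := by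
  have h4 : √(4:ℝ) = 2 := by
    rw [show (4:ℝ) = 2^2 by norm_num, Real.sqrt_sq (by norm_num : (0:ℝ) ≤ 2)]
  rw [stirlingSeq]
  norm_num [h4, div_pow]
  rw [eq_div_iff (by norm_num : (4:ℝ) ≠ 0)]
  field_simp [Real.exp_ne_zero]

private lemma numeric_aux' : 2 * exp (-(1/8) : ℝ) < √π := by
  have h0 : (0:ℝ) ≤ 2 * exp (-(1/8) : ℝ) := by positivity
  have hsq : (2 * exp (-(1/8) : ℝ))^2 < π := by
    have he : (4 * exp (-(1/4) : ℝ))^4 = 256 * (exp 1)⁻¹ := by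
      rw [mul_pow, ← Real.exp_nat_mul]
      norm_num [Real.exp_neg]
    have hπ4 : (3.141592:ℝ)^4 < π^4 :=
      pow_lt_pow_left₀ Real.pi_gt_d6 (by norm_num) (by norm_num)
    have h256 : (256:ℝ) < π^4 * exp 1 := by
      nlinarith [hπ4, Real.exp_one_gt_d9, Real.exp_pos 1]
    have hlt : (4 * exp (-(1/4) : ℝ))^4 < π^4 := by
      rw [he, mul_inv_lt_iff₀ (Real.exp_pos 1)]
      linarith
    have h5 := lt_of_pow_lt_pow_left₀ 4 Real.pi_pos.le hlt
    calc (2 * exp (-(1/8) : ℝ))^2 = 4 * exp (-(1/4) : ℝ) := by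
          rw [mul_pow, ← Real.exp_nat_mul]; norm_num
      _ < π := h5
  calc 2 * exp (-(1/8) : ℝ) = √((2 * exp (-(1/8) : ℝ))^2) := (Real.sqrt_sq h0).symm
    _ < √π := Real.sqrt_lt_sqrt (by positivity) hsq

private lemma pow_identity' (u m : ℕ) (hu : 1 ≤ u) (hm : 1 ≤ m) :
    ((((u+1)*m : ℕ) : ℝ)/exp 1)^((u+1)*m) /
      (((m:ℝ)/exp 1)^m * (((u*m : ℕ):ℝ)/exp 1)^(u*m)) =
    (((u:ℝ)+1)^(u+1)/(u:ℝ)^u)^m := by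
  have hE : Real.exp 1 ≠ 0 := (Real.exp_pos 1).ne'
  have hM : ((m:ℝ)) ≠ 0 := by positivity
  have hU : ((u:ℝ)) ≠ 0 := by
    have : (0:ℝ) < u := by exact_mod_cast hu
    exact this.ne'
  set U := (u:ℝ) with hUdef
  set M := (m:ℝ) with hMdef
  set E := Real.exp 1 with hEdef
  have h1 : (((u+1)*m : ℕ):ℝ) = (U+1)*M := by push_cast; ring
  have h2 : ((u*m : ℕ):ℝ) = U*M := by push_cast; ring
  rw [h1, h2]
  have hb : (M/E) ≠ 0 := div_ne_zero hM hE
  have hc : (U*M/E) ≠ 0 := div_ne_zero (mul_ne_zero hU hM) hE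
  calc ((U+1)*M/E)^((u+1)*m) / ((M/E)^m * ((U*M)/E)^(u*m))
      = (((U+1)*M/E) / (M/E))^m * ((((U+1)*M/E) / (U*M/E)))^(u*m) := by
        rw [show (u+1)*m = m + u*m from by ring, pow_add, mul_div_mul_comm, ← div_pow, ← div_pow]
    _ = (U+1)^m * ((U+1)/U)^(u*m) := by
        congr 2
        · field_simp
        · field_simp
    _ = (U+1)^m * ((U+1)^u/U^u)^m := by rw [pow_mul, div_pow]
    _ = ((U+1)^(u+1)/U^u)^m := by
        rw [← mul_pow]
        congr 1
        rw [pow_succ]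
        field_simp

private lemma sqrt_identity' (u m : ℕ) (hu : 1 ≤ u) (hm : 1 ≤ m) :
    √(2*π) * √(2*(((u+1)*m : ℕ):ℝ)) / (√(2*(m:ℝ)) * √(2*((u*m : ℕ):ℝ))) =
    √π * √((((u:ℝ)+1))^2 / ((u:ℝ) * (((u+1)*m : ℕ):ℝ))) := by
  have hM : (0:ℝ) < (m:ℝ) := by exact_mod_cast hm
  have hU : (0:ℝ) < (u:ℝ) := by exact_mod_cast hu
  have hN : (0:ℝ) < (((u+1)*m : ℕ):ℝ) := by
    have : 0 < (u+1)*m := by positivity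
    exact_mod_cast this
  have hD : (0:ℝ) < ((u*m : ℕ):ℝ) := by
    have : 0 < u*m := Nat.mul_pos hu hm
    exact_mod_cast this
  rw [← Real.sqrt_mul (by positivity) (2*(((u+1)*m : ℕ):ℝ)),
      ← Real.sqrt_mul (by positivity) (2*((u*m : ℕ):ℝ)),
      ← Real.sqrt_div (by positivity),
      ← Real.sqrt_mul (by positivity : (0:ℝ) ≤ π)]
  congr 1
  have hNc : (((u+1)*m : ℕ):ℝ) = ((u:ℝ)+1)*(m:ℝ) := by push_cast; ring
  have hDc : ((u*m : ℕ):ℝ) = (u:ℝ)*(m:ℝ) := by push_cast; ring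
  rw [hNc, hDc]
  field_simp

set_option maxHeartbeats 1000000 in
/-- For positive integers `n = t·m` with `t ≥ 2`:
`e^{-1/8}·(t²/((t-1)n))^{1/2}·(tᵗ/(t-1)^{t-1})^{n/t} < √(2π)·C(n,m)
  < (t²/((t-1)n))^{1/2}·(tᵗ/(t-1)^{t-1})^{n/t}`. -/
theorem stmt7 (n m t : ℕ) (hm : 0 < m) (ht : 2 ≤ t) (hn : n = t * m) :
    Real.exp (-1 / 8) * Real.sqrt ((t : ℝ) ^ 2 / (((t - 1 : ℕ) : ℝ) * (n : ℝ))) *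
        ((t : ℝ) ^ t / ((t - 1 : ℕ) : ℝ) ^ (t - 1)) ^ (n / t) <
      Real.sqrt (2 * Real.pi) * (n.choose m : ℝ) ∧
    Real.sqrt (2 * Real.pi) * (n.choose m : ℝ) <
      Real.sqrt ((t : ℝ) ^ 2 / (((t - 1 : ℕ) : ℝ) * (n : ℝ))) *
        ((t : ℝ) ^ t / ((t - 1 : ℕ) : ℝ) ^ (t - 1)) ^ (n / t) := by
  obtain ⟨u, rfl⟩ : ∃ u, t = u + 1 := ⟨t - 1, by omega⟩
  have hu : 1 ≤ u := by omega
  subst hn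
  rw [show u + 1 - 1 = u from by omega,
      show (u+1)*m/(u+1) = m from Nat.mul_div_cancel_left m (by omega),
      show ((u+1 : ℕ):ℝ) = (u:ℝ)+1 from by push_cast; ring]
  have hm1 : 1 ≤ m := hm
  have hN1 : 0 < (u+1)*m := Nat.mul_pos (by omega) hm
  have hD1 : 0 < u*m := Nat.mul_pos hu hm
  have hmle : m ≤ (u+1)*m := Nat.le_mul_of_pos_left m (by omega)
  have hUR : (0:ℝ) < (u:ℝ) := by exact_mod_cast hu
  have hMR : (0:ℝ) < (m:ℝ) := by exact_mod_cast hm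
  have hNR : (0:ℝ) < (((u+1)*m : ℕ):ℝ) := by exact_mod_cast hN1
  have hDR : (0:ℝ) < ((u*m : ℕ):ℝ) := by exact_mod_cast hD1
  have hs : ∀ k : ℕ, 0 < k → 0 < stirlingSeq k := by
    intro k hk
    have h := stirlingSeq'_pos (k-1)
    rwa [Nat.sub_add_cancel hk] at h
  have hsN := hs _ hN1
  have hsm := hs m hm
  have hsD := hs _ hD1
  have hlt : ∀ k : ℕ, 0 < k → √π < stirlingSeq k := by
    intro k hk
    have h := sqrtPi_lt_stirlingSeq' (k-1)
    rwa [Nat.sub_add_cancel hk] at h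
  have hloglek : ∀ k : ℕ, 0 < k → log (stirlingSeq k) ≤ log (√π) + 1/(12*(k:ℝ)) := by
    intro k hk
    have h := log_stirling_le' (k-1)
    rw [Nat.sub_add_cancel hk] at h
    have e : ((k-1 : ℕ):ℝ) + 1 = (k:ℝ) := by
      rw [Nat.cast_sub hk]; push_cast; ring
    rwa [e] at h
  have hsNm : stirlingSeq ((u+1)*m) ≤ stirlingSeq m := by
    have h := stirlingSeq'_antitone (Nat.sub_le_sub_right hmle 1)
    simp only [Function.comp_apply, Nat.succ_eq_add_one] at h
    rwa [Nat.sub_add_cancel hm1, Nat.sub_add_cancel hN1] at h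
  have hfact : ∀ k : ℕ, 0 < k → (Nat.factorial k : ℝ) = stirlingSeq k * (√(2*(k:ℝ)) * ((k:ℝ)/exp 1)^k) := by
    intro k hk
    have hkR : (0:ℝ) < (k:ℝ) := by exact_mod_cast hk
    have hp : (0:ℝ) < √(2*(k:ℝ)) * ((k:ℝ)/exp 1)^k := by positivity
    rw [stirlingSeq, div_mul_cancel₀]
    exact hp.ne'
  have hchoose : ((((u+1)*m).choose m : ℕ) : ℝ) =
      ((Nat.factorial ((u+1)*m) : ℕ) : ℝ) / (((Nat.factorial m : ℕ):ℝ) * ((Nat.factorial (u*m) : ℕ):ℝ)) := by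
    have h := Nat.choose_mul_factorial_mul_factorial hmle
    rw [show (u+1)*m - m = u*m from by rw [Nat.succ_mul]; omega] at h
    have hfm : (0:ℝ) < ((Nat.factorial m : ℕ):ℝ) := by exact_mod_cast m.factorial_pos
    have hfd : (0:ℝ) < ((Nat.factorial (u*m) : ℕ):ℝ) := by exact_mod_cast (u*m).factorial_pos
    have h2 : ((((u+1)*m).choose m : ℕ) : ℝ) * ((Nat.factorial m : ℕ):ℝ) * ((Nat.factorial (u*m) : ℕ):ℝ)
        = ((Nat.factorial ((u+1)*m) : ℕ):ℝ) := by exact_mod_cast h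
    rw [eq_div_iff (mul_pos hfm hfd).ne', ← h2]
    ring
  have hsq2M : (0:ℝ) < √(2*(m:ℝ)) := Real.sqrt_pos.mpr (by positivity)
  have hsq2N : (0:ℝ) < √(2*(((u+1)*m : ℕ):ℝ)) := Real.sqrt_pos.mpr (by positivity)
  have hsq2D : (0:ℝ) < √(2*((u*m : ℕ):ℝ)) := Real.sqrt_pos.mpr (by positivity)
  have hpM : (0:ℝ) < ((m:ℝ)/exp 1)^m := by positivity
  have hpN : (0:ℝ) < ((((u+1)*m : ℕ):ℝ)/exp 1)^((u+1)*m) := by positivity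
  have hpD : (0:ℝ) < (((u*m : ℕ):ℝ)/exp 1)^(u*m) := by positivity
  have key : √(2*π) * ((((u+1)*m).choose m : ℕ) : ℝ) =
      (√π * stirlingSeq ((u+1)*m) / (stirlingSeq m * stirlingSeq (u*m))) *
      (√((((u:ℝ)+1))^2/((u:ℝ)*(((u+1)*m : ℕ):ℝ))) * ((((u:ℝ)+1))^(u+1)/((u:ℝ))^u)^m) := by
    rw [hchoose, hfact _ hN1, hfact _ hm, hfact _ hD1]
    calc √(2*π) * (stirlingSeq ((u+1)*m) * (√(2*(((u+1)*m : ℕ):ℝ)) * ((((u+1)*m : ℕ):ℝ)/exp 1)^((u+1)*m)) /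
          ((stirlingSeq m * (√(2*(m:ℝ)) * ((m:ℝ)/exp 1)^m)) *
           (stirlingSeq (u*m) * (√(2*((u*m : ℕ):ℝ)) * (((u*m : ℕ):ℝ)/exp 1)^(u*m)))))
        = (stirlingSeq ((u+1)*m) / (stirlingSeq m * stirlingSeq (u*m))) *
          ((√(2*π) * √(2*(((u+1)*m : ℕ):ℝ)) / (√(2*(m:ℝ)) * √(2*((u*m : ℕ):ℝ)))) *
           (((((u+1)*m : ℕ):ℝ)/exp 1)^((u+1)*m) / (((m:ℝ)/exp 1)^m * (((u*m : ℕ):ℝ)/exp 1)^(u*m)))) := by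
          field_simp
      _ = (stirlingSeq ((u+1)*m) / (stirlingSeq m * stirlingSeq (u*m))) *
          ((√π * √((((u:ℝ)+1))^2/((u:ℝ)*(((u+1)*m : ℕ):ℝ)))) * ((((u:ℝ)+1))^(u+1)/((u:ℝ))^u)^m) := by
          rw [sqrt_identity' u m hu hm1, pow_identity' u m hu hm1]
      _ = (√π * stirlingSeq ((u+1)*m) / (stirlingSeq m * stirlingSeq (u*m))) *
          (√((((u:ℝ)+1))^2/((u:ℝ)*(((u+1)*m : ℕ):ℝ))) * ((((u:ℝ)+1))^(u+1)/((u:ℝ))^u)^m) := by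
          ring
  have hX : (0:ℝ) < (((u:ℝ)+1))^2/((u:ℝ)*(((u+1)*m : ℕ):ℝ)) := div_pos (by positivity) (mul_pos hUR hNR)
  have hQ : (0:ℝ) < ((((u:ℝ)+1))^(u+1)/((u:ℝ))^u)^m := pow_pos (div_pos (by positivity) (pow_pos hUR u)) m
  have hB : (0:ℝ) < √((((u:ℝ)+1))^2/((u:ℝ)*(((u+1)*m : ℕ):ℝ))) * ((((u:ℝ)+1))^(u+1)/((u:ℝ))^u)^m :=
    mul_pos (Real.sqrt_pos.mpr hX) hQ
  rw [key]
  constructor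
  · -- lower bound
    rw [mul_assoc]
    have hq : exp (-1/8) < √π * stirlingSeq ((u+1)*m) / (stirlingSeq m * stirlingSeq (u*m)) := by
      rw [lt_div_iff₀ (mul_pos hsm hsD)]
      by_cases hcase : u = 1 ∧ m = 1
      · obtain ⟨h1, h2⟩ := hcase
        subst h1; subst h2
        norm_num [stirlingSeq_one, stirlingSeq_two']
        have hs2 : (√2:ℝ)^2 = 2 := Real.sq_sqrt (by norm_num)
        have hprod : exp 1/√2 * (exp 1/√2) = exp 1^2/2 := by
          rw [div_mul_div_comm, ← sq, ← sq, hs2]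
        have hmul := mul_lt_mul_of_pos_right numeric_aux'
          (show (0:ℝ) < exp 1^2/4 by positivity)
        have hee : (exp 1)^2 = exp 2 := by rw [← Real.exp_nat_mul]; norm_num
        rw [hprod, ← hee]
        nlinarith [hmul]
      · have hnat : 2*(u+1) ≤ 3*(u*m) := by
          rcases Nat.lt_or_ge u 2 with h | h
          · have hu1 : u = 1 := by omega
            subst hu1
            have hm2 : 2 ≤ m := by
              rcases Nat.lt_or_ge m 2 with h' | h'
              · exact absurd ⟨rfl, by omega⟩ hcase
              · exact h'
            omega
          · have h1 : u ≤ u * m := Nat.le_mul_of_pos_right u hm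
            omega
        have hLm := hloglek m hm
        have hLD := hloglek (u*m) hD1
        have hLN : log (√π) < log (stirlingSeq ((u+1)*m)) :=
          Real.log_lt_log (Real.sqrt_pos.mpr pi_pos) (hlt _ hN1)
        have hfrac : 1/(12*(m:ℝ)) + 1/(12*((u*m : ℕ):ℝ)) ≤ 1/8 := by
          have hc : ((2*(u+1) : ℕ):ℝ) ≤ ((3*(u*m) : ℕ):ℝ) := by exact_mod_cast hnat
          rw [div_add_div _ _ (by positivity) (by positivity),
            div_le_div_iff₀ (by positivity) (by norm_num)]
          push_cast at hc ⊢
          linarith [mul_le_mul_of_nonneg_left hc hMR.le]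
        have hlog : log (exp (-1/8) * (stirlingSeq m * stirlingSeq (u*m))) <
            log (√π * stirlingSeq ((u+1)*m)) := by
          rw [Real.log_mul (Real.exp_ne_zero _) (mul_pos hsm hsD).ne',
            Real.log_mul hsm.ne' hsD.ne', Real.log_exp,
            Real.log_mul (Real.sqrt_pos.mpr pi_pos).ne' hsN.ne']
          linarith
        have h6 := Real.exp_lt_exp.mpr hlog
        rwa [Real.exp_log (mul_pos (Real.exp_pos _) (mul_pos hsm hsD)),
          Real.exp_log (mul_pos (Real.sqrt_pos.mpr pi_pos) hsN)] at h6
    exact mul_lt_mul_of_pos_right hq hB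
  · -- upper bound
    have hq : √π * stirlingSeq ((u+1)*m) / (stirlingSeq m * stirlingSeq (u*m)) < 1 := by
      rw [div_lt_one (mul_pos hsm hsD)]
      calc √π * stirlingSeq ((u+1)*m) ≤ √π * stirlingSeq m :=
            mul_le_mul_of_nonneg_left hsNm (Real.sqrt_nonneg π)
        _ = stirlingSeq m * √π := mul_comm _ _
        _ < stirlingSeq m * stirlingSeq (u*m) :=
            mul_lt_mul_of_pos_left (hlt _ hD1) hsm
    calc (√π * stirlingSeq ((u+1)*m) / (stirlingSeq m * stirlingSeq (u*m))) *
          (√((((u:ℝ)+1))^2/((u:ℝ)*(((u+1)*m : ℕ):ℝ))) * ((((u:ℝ)+1))^(u+1)/((u:ℝ))^u)^m)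
        < 1 * (√((((u:ℝ)+1))^2/((u:ℝ)*(((u+1)*m : ℕ):ℝ))) * ((((u:ℝ)+1))^(u+1)/((u:ℝ))^u)^m) :=
          mul_lt_mul_of_pos_right hq hB
      _ = _ := one_mul _
end

section
/- Let T be a non-abelian finite simple group and let G = T^k.(Out(T) × S_k) be the diagonal type primitive group acting on Ω = Ω(k,T), with point stabiliser D. Then {D, D(φ_{t₁}, ..., φ_{t_k})} is a base for G if and only if t₁, ..., t_k ∈ T are pairwise distinct and the setwise stabiliser of {t₁, ..., t_k} in Hol(T) is trivial. -/
def permMulAut {k : ℕ} (M : Type*) [Group M] :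
    Equiv.Perm (Fin k) →* MulAut (Fin k → M) where
  toFun π :=
    { toFun := fun f => f ∘ π.symm
      invFun := fun f => f ∘ π
      left_inv := fun f => by funext i; simp
      right_inv := fun f => by funext i; simp
      map_mul' := fun f g => rfl }
  map_one' := by
    apply MulEquiv.toMonoidHom_injective
    ext f i
    rfl
  map_mul' π₁ π₂ := by
    apply MulEquiv.toMonoidHom_injective
    ext f i
    rfl

abbrev DiagW (T : Type*) [Group T] (k : ℕ) :=
  SemidirectProduct (Fin k → MulAut T) (Equiv.Perm (Fin k)) (permMulAut (MulAut T))

lemma conj_mem_aux {T : Type*} [Group T] (β : MulAut T) {u : MulAut T}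
    (hu : u ∈ (MulAut.conj (G := T)).range) :
    β * u * β⁻¹ ∈ (MulAut.conj (G := T)).range := by
  obtain ⟨g, rfl⟩ := hu
  refine ⟨β g, ?_⟩
  ext x
  simp [MulAut.conj]

lemma conj_mem_aux' {T : Type*} [Group T] (β : MulAut T) {u : MulAut T}
    (hu : u ∈ (MulAut.conj (G := T)).range) :
    β⁻¹ * u * β ∈ (MulAut.conj (G := T)).range := by
  simpa using conj_mem_aux β⁻¹ hu

/-- The diagonal-type group `W(k,T) = T^k.(Out(T) × S_k)`: the subgroup of
`Aut(T)^k ⋊ S_k` of elements all of whose components lie in a common coset of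
`Inn(T)`. -/
def diagWfull (T : Type*) [Group T] (k : ℕ) : Subgroup (DiagW T k) where
  carrier := {w | ∀ i j, (w.left i)⁻¹ * w.left j ∈ (MulAut.conj (G := T)).range}
  one_mem' := by
    intro i j
    exact ⟨1, by simp⟩
  mul_mem' := by
    intro a b ha hb i j
    have hab : ∀ i, (a * b).left i = a.left i * b.left (a.right.symm i) := by
      intro i
      rw [SemidirectProduct.mul_left]
      rfl
    rw [hab i, hab j]
    have key : (a.left i * b.left (a.right.symm i))⁻¹ * (a.left j * b.left (a.right.symm j)) =
        ((b.left (a.right.symm i))⁻¹ * ((a.left i)⁻¹ * a.left j) * b.left (a.right.symm i)) *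
          ((b.left (a.right.symm i))⁻¹ * b.left (a.right.symm j)) := by
      group
    rw [key]
    exact Subgroup.mul_mem _ (conj_mem_aux' _ (ha i j)) (hb _ _)
  inv_mem' := by
    intro a ha i j
    have hai : ∀ i, (a⁻¹).left i = (a.left (a.right i))⁻¹ := by
      intro i
      rw [SemidirectProduct.inv_left]
      rfl
    rw [hai i, hai j]
    have key : ((a.left (a.right i))⁻¹)⁻¹ * (a.left (a.right j))⁻¹ =
        (a.left (a.right i)) *
          ((a.left (a.right j))⁻¹ * a.left (a.right i)) * (a.left (a.right i))⁻¹ := by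
      group
    rw [key]
    exact conj_mem_aux _ (ha _ _)

/-- The diagonal subgroup `D = {(α,…,α)π}` of `Aut(T)^k ⋊ S_k`. -/
def diagD (T : Type*) [Group T] (k : ℕ) : Subgroup (DiagW T k) where
  carrier := {w | ∀ i j, w.left i = w.left j}
  one_mem' := by intro i j; rfl
  mul_mem' := by
    intro a b ha hb i j
    have hab : ∀ i, (a * b).left i = a.left i * b.left (a.right.symm i) := by
      intro i
      rw [SemidirectProduct.mul_left]
      rfl
    rw [hab i, hab j, ha i j, hb (a.right.symm i) (a.right.symm j)]
  inv_mem' := by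
    intro a ha i j
    have hai : ∀ i, (a⁻¹).left i = (a.left (a.right i))⁻¹ := by
      intro i
      rw [SemidirectProduct.inv_left]
      rfl
    rw [hai i, hai j, ha (a.right i) (a.right j)]

/-- The element of `W(k,T)` whose coset corresponds to the point
`D(φ_{t₁},…,φ_{t_k})` of `Ω(k,T)` (recorded via right-to-left coset translation). -/
def diagPoint {T : Type*} [Group T] {k : ℕ} (t : Fin k → T) : ↥(diagWfull T k) :=
  ⟨SemidirectProduct.inl (fun i => MulAut.conj (t i)), by
    intro i j
    exact ⟨(t i)⁻¹ * t j, by rw [map_mul, map_inv]; rfl⟩⟩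

/-!
An element fixing both `D` and `Dp`, with `p = diagPoint t`, is a diagonal element `(β,…,β)π`
whose conjugate by `p` is again diagonal. The `π j`-th coordinate of that conjugate is
`conj (t_{π j}⁻¹ β(t_j)) * β`, and `conj` is injective because `T` has trivial centre, so the
condition says that `x ↦ β(x)c` sends `t_j` to `t_{π j}` for a single `c`. Every element
`x ↦ α(g⁻¹x)` of `Hol(T)` has this form, with `β = conj (α g⁻¹) * α` and `c = α g⁻¹`. Hence the
pointwise stabiliser is trivial iff no nontrivial map of `Hol(T)` permutes the family `t`; applied
to a transposition of two equal entries this forces injectivity, and for an injective family it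
is triviality of the setwise stabiliser of `{t₁,…,t_k}`.
-/

open Function

lemma IsSimpleGroup.center_eq_bot {T : Type*} [Group T] [IsSimpleGroup T]
    (hnab : ¬ ∀ a b : T, a * b = b * a) : Subgroup.center T = ⊥ :=
  (IsSimpleGroup.eq_bot_or_eq_top_of_normal _ inferInstance).resolve_right fun h =>
    hnab fun a b => (Subgroup.mem_center_iff.mp (h ▸ Subgroup.mem_top a) b).symm

lemma MulAut.conj_injective_of_center_eq_bot {T : Type*} [Group T]
    (h : Subgroup.center T = ⊥) : Injective (MulAut.conj : T →* MulAut T) := by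
  refine (injective_iff_map_eq_one _).2 fun g hg => ?_
  have hg : g ∈ Subgroup.center T := Subgroup.mem_center_iff.2 fun x =>
    (mul_inv_eq_iff_eq_mul.mp (DFunLike.congr_fun hg x)).symm
  simpa [h] using hg

lemma MulAut.apply_inv_mul {T : Type*} [Group T] (α : MulAut T) (g x : T) :
    α (g⁻¹ * x) = (MulAut.conj (α g⁻¹) * α) x * α g⁻¹ := by
  simp [mul_assoc]

lemma exists_perm_apply_eq_of_image_range_eq {ι α : Type*} [Finite ι] {t : ι → α}
    (ht : Injective t) {f : α → α} (hf : Injective f) (h : f '' Set.range t = Set.range t) :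
    ∃ π : Equiv.Perm ι, ∀ i, t (π i) = f (t i) := by
  choose σ hσ using fun i => h.subset ⟨t i, ⟨i, rfl⟩, rfl⟩
  have hσinj : Injective σ := fun i j hij => ht (hf (by rw [← hσ i, ← hσ j, hij]))
  exact ⟨Equiv.ofBijective σ hσinj.bijective_of_finite, hσ⟩

section AffineRigid

variable {ι T : Type*} [Group T]

/-- `x ↦ β x * c` runs over `Hol(T)` as `β` and `c` vary; `t` is rigid when none of these
maps permutes `t` except the identity. -/
def IsAffineRigid (t : ι → T) : Prop :=
  ∀ (β : MulAut T) (c : T) (π : Equiv.Perm ι), (∀ i, t (π i) = β (t i) * c) → β = 1 ∧ π = 1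

lemma IsAffineRigid.injective {t : ι → T} (h : IsAffineRigid t) : Injective t := by
  classical
  intro a b hab
  refine Equiv.swap_eq_one_iff.mp (h 1 1 (Equiv.swap a b) fun i => ?_).2
  rw [Equiv.apply_swap_eq_self hab, MulAut.one_apply, mul_one]

lemma IsAffineRigid.eq_one_of_image_range_eq [Finite ι] [Nonempty ι] {t : ι → T}
    (h : IsAffineRigid t) {g : T} {α : MulAut T}
    (hst : (fun x => α (g⁻¹ * x)) '' Set.range t = Set.range t) : g = 1 ∧ α = 1 := by
  obtain ⟨π, hπ⟩ := exists_perm_apply_eq_of_image_range_eq h.injective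
    (fun x y hxy => mul_left_cancel (α.injective hxy)) hst
  have hπ' : ∀ i, t (π i) = (MulAut.conj (α g⁻¹) * α) (t i) * α g⁻¹ := fun i =>
    (hπ i).trans (α.apply_inv_mul g (t i))
  obtain ⟨hβ, rfl⟩ := h _ _ π hπ'
  obtain ⟨i⟩ := ‹Nonempty ι›
  have hc : α g⁻¹ = 1 := by
    have hi := hπ' i
    rwa [hβ, Equiv.Perm.one_apply, MulAut.one_apply, left_eq_mul] at hi
  have hg : g = 1 := inv_eq_one.mp ((map_eq_one_iff α α.injective).mp hc)
  refine ⟨hg, ?_⟩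
  simpa [hc] using hβ

lemma isAffineRigid_of_injective {t : ι → T} (ht : Injective t)
    (hst : ∀ (g : T) (α : MulAut T),
      (fun x => α (g⁻¹ * x)) '' Set.range t = Set.range t → g = 1 ∧ α = 1) :
    IsAffineRigid t := by
  intro β c π hπ
  set α : MulAut T := (MulAut.conj c)⁻¹ * β
  set g : T := (α⁻¹ c)⁻¹
  have hαg : α g⁻¹ = c := by simp [g]
  have hhol : (fun x => α (g⁻¹ * x)) = fun x => β x * c := by
    funext x
    rw [α.apply_inv_mul, hαg, mul_inv_cancel_left]
  have himg : (fun x => α (g⁻¹ * x)) '' Set.range t = Set.range t := by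
    rw [hhol, ← Set.range_comp, ← π.surjective.range_comp t]
    exact congrArg Set.range (funext hπ).symm
  obtain ⟨hg, hα⟩ := hst g α himg
  have hc : c = 1 := by rw [← hαg, hg, inv_one, map_one]
  have hβ : β = 1 := by simpa [α, hc] using hα
  refine ⟨hβ, Equiv.ext fun i => ht ?_⟩
  simpa [hβ, hc] using hπ i

lemma isAffineRigid_iff [Finite ι] [Nonempty ι] {t : ι → T} :
    IsAffineRigid t ↔ Injective t ∧ ∀ (g : T) (α : MulAut T),
      (fun x => α (g⁻¹ * x)) '' Set.range t = Set.range t → g = 1 ∧ α = 1 :=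
  ⟨fun h => ⟨h.injective, fun _ _ => h.eq_one_of_image_range_eq⟩,
    fun h => isAffineRigid_of_injective h.1 h.2⟩

end AffineRigid

section Diagonal

variable {T : Type*} [Group T] {k : ℕ}

lemma DiagW.mul_left_apply (a b : DiagW T k) (i : Fin k) :
    (a * b).left i = a.left i * b.left (a.right.symm i) := by
  rw [SemidirectProduct.mul_left]
  rfl

def diagElem (β : MulAut T) (π : Equiv.Perm (Fin k)) : DiagW T k := ⟨fun _ => β, π⟩

lemma diagElem_mem_diagWfull (β : MulAut T) (π : Equiv.Perm (Fin k)) :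
    diagElem β π ∈ diagWfull T k :=
  fun _ _ => ⟨1, by simp [diagElem]⟩

lemma mem_diagD_iff_exists_diagElem [NeZero k] {x : DiagW T k} :
    x ∈ diagD T k ↔ ∃ β π, x = diagElem β π := by
  constructor
  · intro hx
    exact ⟨x.left 0, x.right, SemidirectProduct.ext (funext fun i => hx i 0) rfl⟩
  · rintro ⟨β, π, rfl⟩ i j
    rfl

lemma diagElem_eq_one_iff [NeZero k] {β : MulAut T} {π : Equiv.Perm (Fin k)} :
    diagElem β π = 1 ↔ β = 1 ∧ π = 1 := by
  rw [SemidirectProduct.ext_iff]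
  exact and_congr_left' ⟨fun h => congrFun h 0, fun h => funext fun _ => h⟩

lemma conj_diagElem_left (t : Fin k → T) (β : MulAut T) (π : Equiv.Perm (Fin k)) (j : Fin k) :
    ((diagPoint t : DiagW T k)⁻¹ * diagElem β π * diagPoint t).left (π j) =
      MulAut.conj ((t (π j))⁻¹ * β (t j)) * β := by
  rw [diagPoint, ← map_inv, DiagW.mul_left_apply, DiagW.mul_left_apply]
  ext x
  simp [diagElem, mul_assoc, -SemidirectProduct.mk_eq_inl_mul_inr]

lemma conj_diagElem_mem_diagD_iff [NeZero k] (hconj : Injective (MulAut.conj : T →* MulAut T))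
    (t : Fin k → T) (β : MulAut T) (π : Equiv.Perm (Fin k)) :
    (diagPoint t : DiagW T k)⁻¹ * diagElem β π * diagPoint t ∈ diagD T k ↔
      ∃ c, ∀ j, t (π j) = β (t j) * c := by
  have hconst : (diagPoint t : DiagW T k)⁻¹ * diagElem β π * diagPoint t ∈ diagD T k ↔
      ∀ j j', (t (π j))⁻¹ * β (t j) = (t (π j'))⁻¹ * β (t j') := by
    refine π.forall_congr_right.symm.trans <| forall_congr' fun j =>
      π.forall_congr_right.symm.trans <| forall_congr' fun j' => ?_
    rw [conj_diagElem_left, conj_diagElem_left, mul_left_inj, hconj.eq_iff]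
  rw [hconst]
  constructor
  · intro h
    refine ⟨(β (t 0))⁻¹ * t (π 0), fun j => ?_⟩
    rw [← inv_mul_eq_iff_eq_mul, ← inv_inj, mul_inv_rev, inv_inv, h j 0, mul_inv_rev, inv_inv]
  · intro ⟨c, hc⟩ j j'
    rw [hc, hc, mul_inv_rev, mul_inv_rev, mul_assoc, mul_assoc, inv_mul_cancel, inv_mul_cancel]

end Diagonal

lemma smul_mk_eq_mk_iff {G : Type*} [Group G] {H : Subgroup G} {w p : G} :
    w • (QuotientGroup.mk p : G ⧸ H) = QuotientGroup.mk p ↔ p⁻¹ * w * p ∈ H := by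
  rw [MulAction.Quotient.smul_mk, eq_comm, QuotientGroup.eq, smul_eq_mul, mul_assoc]

abbrev DiagΩ (T : Type*) [Group T] (k : ℕ) : Type _ :=
  ↥(diagWfull T k) ⧸ (diagD T k).subgroupOf (diagWfull T k)

section Base

variable {T : Type*} [Group T] {k : ℕ} [NeZero k]

lemma fixes_mk_one_and_mk_diagPoint_iff (hconj : Injective (MulAut.conj : T →* MulAut T))
    (t : Fin k → T) (w : diagWfull T k) :
    (w • (QuotientGroup.mk 1 : DiagΩ T k) = QuotientGroup.mk 1 ∧
        w • (QuotientGroup.mk (diagPoint t) : DiagΩ T k) = QuotientGroup.mk (diagPoint t)) ↔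
      ∃ β π, (w : DiagW T k) = diagElem β π ∧ ∃ c, ∀ j, t (π j) = β (t j) * c := by
  simp only [smul_mk_eq_mk_iff, Subgroup.mem_subgroupOf, inv_one, one_mul, mul_one,
    Subgroup.coe_mul, Subgroup.coe_inv]
  rw [mem_diagD_iff_exists_diagElem]
  constructor
  · rintro ⟨⟨β, π, hw⟩, hp⟩
    refine ⟨β, π, hw, ?_⟩
    rwa [hw, conj_diagElem_mem_diagD_iff hconj] at hp
  · rintro ⟨β, π, hw, hp⟩
    refine ⟨⟨β, π, hw⟩, ?_⟩
    rwa [hw, conj_diagElem_mem_diagD_iff hconj]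

lemma isBase_iff_isAffineRigid (hconj : Injective (MulAut.conj : T →* MulAut T))
    (t : Fin k → T) :
    (∀ w : diagWfull T k,
        w • (QuotientGroup.mk 1 : DiagΩ T k) = QuotientGroup.mk 1 →
        w • (QuotientGroup.mk (diagPoint t) : DiagΩ T k) = QuotientGroup.mk (diagPoint t) →
        w = 1) ↔ IsAffineRigid t := by
  constructor
  · intro hbase β c π hπ
    have hfix := (fixes_mk_one_and_mk_diagPoint_iff hconj t ⟨_, diagElem_mem_diagWfull β π⟩).2
      ⟨β, π, rfl, c, hπ⟩
    exact diagElem_eq_one_iff.1 (congrArg Subtype.val (hbase _ hfix.1 hfix.2))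
  · intro hrigid w h1 hp
    obtain ⟨β, π, hw, c, hπ⟩ := (fixes_mk_one_and_mk_diagPoint_iff hconj t w).1 ⟨h1, hp⟩
    exact Subtype.ext (hw.trans (diagElem_eq_one_iff.2 (hrigid β c π hπ)))

end Base

theorem stmt14_general {T : Type*} [Group T] [IsSimpleGroup T]
    (hnab : ¬ ∀ a b : T, a * b = b * a) {k : ℕ} (hk : 2 ≤ k) (t : Fin k → T) :
    (∀ w : ↥(diagWfull T k),
        w • (QuotientGroup.mk (1 : ↥(diagWfull T k)) :
            ↥(diagWfull T k) ⧸ (diagD T k).subgroupOf (diagWfull T k)) =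
          QuotientGroup.mk 1 →
        w • (QuotientGroup.mk (diagPoint t) :
            ↥(diagWfull T k) ⧸ (diagD T k).subgroupOf (diagWfull T k)) =
          QuotientGroup.mk (diagPoint t) →
        w = 1) ↔
      (Function.Injective t ∧
        ∀ (g : T) (α : MulAut T),
          (fun x => α (g⁻¹ * x)) '' Set.range t = Set.range t → g = 1 ∧ α = 1) := by
  have : NeZero k := ⟨by omega⟩
  have hconj := MulAut.conj_injective_of_center_eq_bot (IsSimpleGroup.center_eq_bot hnab)
  exact (isBase_iff_isAffineRigid hconj t).trans isAffineRigid_iff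

/-- `{D, D(φ_{t₁},…,φ_{t_k})}` is a base for the diagonal type group
`G = T^k.(Out(T) × S_k)` acting on `Ω(k,T) = W/D` if and only if `t₁,…,t_k` are
pairwise distinct and the setwise stabiliser of `{t₁,…,t_k}` in `Hol(T)` is
trivial. -/
theorem stmt14 {T : Type*} [Group T] [Fintype T] [IsSimpleGroup T]
    (hnab : ¬ ∀ a b : T, a * b = b * a) {k : ℕ} (hk : 2 ≤ k) (t : Fin k → T) :
    (∀ w : ↥(diagWfull T k),
        w • (QuotientGroup.mk (1 : ↥(diagWfull T k)) :
            ↥(diagWfull T k) ⧸ (diagD T k).subgroupOf (diagWfull T k)) =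
          QuotientGroup.mk 1 →
        w • (QuotientGroup.mk (diagPoint t) :
            ↥(diagWfull T k) ⧸ (diagD T k).subgroupOf (diagWfull T k)) =
          QuotientGroup.mk (diagPoint t) →
        w = 1) ↔
      (Function.Injective t ∧
        ∀ (g : T) (α : MulAut T),
          (fun x => α (g⁻¹ * x)) '' Set.range t = Set.range t → g = 1 ∧ α = 1) :=
  stmt14_general hnab hk t
end

section
/- Let T be a finite group, Hol(T) acting on the set P_k of k-subsets of T, and let m > 0 be a real number. If C(|T|, k) > m·Σ_{σ ∈ R} |fix(σ, P_k)| where R is the set of prime-order elements of Hol(T), then the proportion of k-subsets of T ∖ {1} whose setwise stabiliser in Aut(T) is non-trivial is strictly less than 1/m. -/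
/-- The holomorph `Hol(T) = T ⋊ Aut(T)`. -/
abbrev Hol (T : Type*) [Group T] : Type _ :=
  SemidirectProduct T (MulAut T) (MonoidHom.id (MulAut T))

/-- The natural action of `Hol(T)` on `T`. -/
instance holMulAction {T : Type*} [Group T] : MulAction (Hol T) T where
  smul σ t := σ.left * σ.right t
  one_smul t := by
    show (1 : Hol T).left * (1 : Hol T).right t = t
    simp
  mul_smul a b t := by
    show (a * b).left * (a * b).right t = a.left * a.right (b.left * b.right t)
    simp [SemidirectProduct.mul_left, SemidirectProduct.mul_right, mul_assoc]

private lemma image_pow_fix {T : Type*} [Group T] [DecidableEq T] (α : MulAut T) (R : Finset T)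
    (hR : R.image ⇑α = R) : ∀ j : ℕ, R.image ⇑(α ^ j) = R := by
  intro j
  induction j with
  | zero => simp
  | succ j ih =>
      have hc : ⇑(α ^ (j + 1)) = ⇑(α ^ j) ∘ ⇑α := by
        ext t; simp [pow_succ]
      rw [hc, ← Finset.image_image, hR, ih]

/-- If `C(|T|, k) > m·∑_{σ ∈ R} |fix(σ, P_k)|`, where `R` is the set of prime-order
elements of `Hol(T)` and `P_k` the set of `k`-subsets of `T`, then the proportion of
`k`-subsets of `T ∖ {1}` with non-trivial setwise stabiliser in `Aut(T)` is less
than `1/m`. -/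
theorem stmt18 {T : Type*} [Group T] [Fintype T] [DecidableEq T] (k : ℕ)
    (m : ℝ) (hm : 0 < m)
    (h : m * (∑ᶠ σ ∈ {σ : Hol T | ∃ p : ℕ, p.Prime ∧ orderOf σ = p},
        (Nat.card {S : Finset T // S.card = k ∧ S.image (fun x => σ • x) = S} : ℝ)) <
      ((Fintype.card T).choose k : ℝ)) :
    (Nat.card {R : Finset T // ↑R ⊆ {x : T | x ≠ 1} ∧ R.card = k ∧
        ∃ α : MulAut T, α ≠ 1 ∧ α '' ↑R = ↑R} : ℝ) /
      ((Fintype.card T - 1).choose k : ℝ) < 1 / m := by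
  classical
  have hsmul : ∀ (σ : Hol T) (t : T), σ • t = σ.left * σ.right t := fun _ _ => rfl
  haveI finHol : Finite (Hol T) :=
    Finite.of_injective (fun σ : Hol T => (σ.left, σ.right))
      (fun a b hab => SemidirectProduct.ext (congrArg Prod.fst hab) (congrArg Prod.snd hab))
  haveI : Fintype (Hol T) := Fintype.ofFinite _
  set n := Fintype.card T with hn
  have hn1 : 0 < n := Fintype.card_pos
  by_cases hk : n ≤ k
  · rw [Nat.choose_eq_zero_of_lt (by omega), Nat.cast_zero, div_zero]
    positivity
  push_neg at hk
  set Pfin : Finset (Hol T) :=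
    Finset.univ.filter (fun σ => ∃ p : ℕ, p.Prime ∧ orderOf σ = p) with hPfin
  set fixFin : Hol T → Finset (Finset T) :=
    fun σ => Finset.univ.filter (fun S => S.card = k ∧ S.image (fun x => σ • x) = S) with hfixFin
  set badFin : Finset (Finset T) := Finset.univ.filter (fun R => ↑R ⊆ {x : T | x ≠ 1} ∧
      R.card = k ∧ ∃ α : MulAut T, α ≠ 1 ∧ α '' ↑R = ↑R) with hbadFin
  have hNbad : Nat.card {R : Finset T // ↑R ⊆ {x : T | x ≠ 1} ∧ R.card = k ∧
      ∃ α : MulAut T, α ≠ 1 ∧ α '' ↑R = ↑R} = badFin.card := by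
    rw [Nat.card_eq_fintype_card, hbadFin]
    exact Fintype.card_subtype _
  have hNfix : ∀ σ : Hol T,
      Nat.card {S : Finset T // S.card = k ∧ S.image (fun x => σ • x) = S} = (fixFin σ).card := by
    intro σ
    rw [Nat.card_eq_fintype_card]
    exact Fintype.card_subtype _
  have hPset : {σ : Hol T | ∃ p : ℕ, p.Prime ∧ orderOf σ = p} = ↑Pfin := by
    ext σ; simp [hPfin]
  rw [hPset, finsum_mem_coe_finset] at h
  simp only [hNfix] at h
  -- derive the "bad sets have a prime-order automorphism" condition
  have hbadcond : ∀ R : Finset T, R ∈ badFin →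
      ∃ β : MulAut T, (∃ q : ℕ, q.Prime ∧ orderOf β = q) ∧ R.image ⇑β = R := by
    intro R hR
    obtain ⟨-, -, -, α, hα1, hαR⟩ := Finset.mem_filter.mp hR
    have hfin : R.image ⇑α = R := by
      apply Finset.coe_injective
      rw [Finset.coe_image]; exact hαR
    have ho0 : orderOf α ≠ 0 := (orderOf_pos α).ne'
    have ho1 : orderOf α ≠ 1 := by simpa [orderOf_eq_one_iff] using hα1
    have hp : (orderOf α).minFac.Prime := Nat.minFac_prime ho1
    refine ⟨α ^ (orderOf α / (orderOf α).minFac), ⟨(orderOf α).minFac, hp, ?_⟩, ?_⟩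
    · exact orderOf_pow_orderOf_div ho0 (Nat.minFac_dvd _)
    · exact image_pow_fix α R hfin _
  -- the key combinatorial inequality
  have key : badFin.card * n ≤ ∑ σ ∈ Pfin, (fixFin σ).card * (n - k) := by
    have hsum : ∑ σ ∈ Pfin, (fixFin σ).card * (n - k)
        = (Pfin.sigma (fun σ => (fixFin σ).sigma (fun S => Finset.univ \ S))).card := by
      rw [Finset.card_sigma]
      refine Finset.sum_congr rfl (fun σ _ => ?_)
      rw [Finset.card_sigma]
      rw [Finset.sum_congr rfl (fun S hS => ?_), Finset.sum_const, smul_eq_mul]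
      rw [Finset.card_sdiff_of_subset (Finset.subset_univ S), Finset.card_univ,
        ((Finset.mem_filter.mp hS).2).1]
    rw [hsum, show badFin.card * n = (badFin ×ˢ (Finset.univ : Finset T)).card by
      rw [Finset.card_product, Finset.card_univ]]
    set F : Finset T × T → ((_ : Hol T) × (_ : Finset T) × T) := fun p =>
      if hβ : ∃ β : MulAut T, (∃ q : ℕ, q.Prime ∧ orderOf β = q) ∧ p.1.image ⇑β = p.1 then
        ⟨SemidirectProduct.inl p.2 * SemidirectProduct.inr hβ.choose *
            (SemidirectProduct.inl p.2)⁻¹,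
          p.1.image (fun r => p.2 * r), p.2⟩
      else ⟨1, ∅, p.2⟩ with hF
    refine Finset.card_le_card_of_injOn F ?_ ?_
    · rintro ⟨R, x⟩ hRx
      have hR : R ∈ badFin := (Finset.mem_product.mp hRx).1
      have hβ := hbadcond R hR
      have hFval : F (R, x) = ⟨SemidirectProduct.inl x * SemidirectProduct.inr hβ.choose *
          (SemidirectProduct.inl x)⁻¹, R.image (fun r => x * r), x⟩ := by
        rw [hF]; exact dif_pos hβ
      rw [hFval]
      set β₀ : MulAut T := hβ.choose with hβ₀
      obtain ⟨⟨q, hq, hoq⟩, hβR⟩ := hβ.choose_spec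
      set σx : Hol T := SemidirectProduct.inl x * SemidirectProduct.inr β₀ *
        (SemidirectProduct.inl x)⁻¹ with hσx
      have hleft : σx.left = x * β₀ x⁻¹ := by
        simp [hσx, SemidirectProduct.mul_left, SemidirectProduct.mul_right]
      have hright : σx.right = β₀ := by
        simp [hσx, SemidirectProduct.mul_right]
      refine Finset.mem_sigma.mpr ⟨?_, Finset.mem_sigma.mpr ⟨?_, ?_⟩⟩
      · -- σx ∈ Pfin
        rw [hPfin, Finset.mem_filter]
        refine ⟨Finset.mem_univ _, q, hq, ?_⟩
        have h1 : orderOf σx = orderOf (SemidirectProduct.inr (φ := MonoidHom.id (MulAut T)) β₀) := by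
          have := (MulAut.conj (SemidirectProduct.inl (φ := MonoidHom.id (MulAut T)) x)).orderOf_eq
            (SemidirectProduct.inr β₀)
          simpa [MulAut.conj_apply, hσx] using this
        rw [h1, orderOf_injective SemidirectProduct.inr SemidirectProduct.inr_injective, hoq]
      · -- R.image (x * ·) ∈ fixFin σx
        rw [hfixFin, Finset.mem_filter]
        refine ⟨Finset.mem_univ _, ?_, ?_⟩
        · rw [Finset.card_image_of_injective R (mul_right_injective x)]
          exact ((Finset.mem_filter.mp hR).2).2.1
        · rw [Finset.image_image]
          have hfun : (fun t => σx • t) ∘ (fun r => x * r) = (fun r => x * r) ∘ ⇑β₀ := by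
            funext r
            simp only [Function.comp_apply, hsmul, hleft, hright, map_mul, map_inv]
            group
          rw [hfun, ← Finset.image_image, hβR]
      · -- x ∉ R.image (x * ·)
        rw [Finset.mem_sdiff]
        refine ⟨Finset.mem_univ _, ?_⟩
        intro hx
        obtain ⟨r, hrR, hr⟩ := Finset.mem_image.mp hx
        have hr1 : r = 1 := mul_left_cancel (a := x) (by simpa using hr)
        have := ((Finset.mem_filter.mp hR).2).1 hrR
        simp [hr1] at this
    · -- injectivity
      rintro ⟨R, x⟩ hRx ⟨R', x'⟩ hRx' hFF
      have hR : R ∈ badFin := (Finset.mem_product.mp hRx).1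
      have hR' : R' ∈ badFin := (Finset.mem_product.mp hRx').1
      have hβ := hbadcond R hR
      have hβ' := hbadcond R' hR'
      rw [hF] at hFF
      simp only [dif_pos hβ, dif_pos hβ'] at hFF
      obtain ⟨-, hrest⟩ := Sigma.mk.inj_iff.mp hFF
      obtain ⟨hS, hx⟩ := Sigma.mk.inj_iff.mp (eq_of_heq hrest)
      have hx' : x = x' := eq_of_heq hx
      subst hx'
      have hRR' : R = R' :=
        Finset.image_injective (mul_right_injective x) hS
      rw [hRR']
  -- choose identity
  have hchoose : n.choose k * (n - k) = n * (n - 1).choose k := by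
    obtain ⟨M, hM⟩ : ∃ M, n = M + 1 := ⟨n - 1, by omega⟩
    rw [hM, Nat.add_sub_cancel]
    calc (M + 1).choose k * (M + 1 - k)
        = (M + 1).choose (k + 1) * (k + 1) := (Nat.choose_succ_right_eq _ _).symm
      _ = (M + 1) * M.choose k := (Nat.add_one_mul_choose_eq M k).symm
  -- real arithmetic
  rw [hNbad]
  have hC1 : (0 : ℝ) < ((n - 1).choose k : ℝ) := by
    exact_mod_cast Nat.choose_pos (by omega)
  rw [div_lt_div_iff₀ hC1 hm]
  have keyR : (badFin.card : ℝ) * n ≤ (∑ σ ∈ Pfin, ((fixFin σ).card : ℝ)) * ((n : ℝ) - k) := by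
    have := key
    have h2 : ((badFin.card * n : ℕ) : ℝ) ≤ ((∑ σ ∈ Pfin, (fixFin σ).card * (n - k) : ℕ) : ℝ) := by
      exact_mod_cast this
    push_cast [Nat.cast_sub hk.le] at h2
    rw [← Finset.sum_mul] at h2
    exact h2
  have hchooseR : ((n.choose k : ℝ)) * ((n : ℝ) - k) = (n : ℝ) * ((n - 1).choose k : ℝ) := by
    have : ((n.choose k * (n - k) : ℕ) : ℝ) = ((n * (n - 1).choose k : ℕ) : ℝ) := by
      exact_mod_cast hchoose
    push_cast [Nat.cast_sub hk.le] at this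
    exact this
  have hnk : (0 : ℝ) < (n : ℝ) - k := by
    have : (k : ℝ) < n := by exact_mod_cast hk
    linarith
  have h1 : m * ((badFin.card : ℝ) * n) ≤ m * ((∑ σ ∈ Pfin, ((fixFin σ).card : ℝ)) * ((n : ℝ) - k)) :=
    mul_le_mul_of_nonneg_left keyR hm.le
  have h2 : m * (∑ σ ∈ Pfin, ((fixFin σ).card : ℝ)) * ((n : ℝ) - k)
      < (n.choose k : ℝ) * ((n : ℝ) - k) :=
    mul_lt_mul_of_pos_right h hnk
  have h3 : m * ((badFin.card : ℝ) * n) < (n : ℝ) * ((n - 1).choose k : ℝ) := by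
    calc m * ((badFin.card : ℝ) * n) ≤ m * ((∑ σ ∈ Pfin, ((fixFin σ).card : ℝ)) * ((n : ℝ) - k)) := h1
      _ = m * (∑ σ ∈ Pfin, ((fixFin σ).card : ℝ)) * ((n : ℝ) - k) := by ring
      _ < (n.choose k : ℝ) * ((n : ℝ) - k) := h2
      _ = (n : ℝ) * ((n - 1).choose k : ℝ) := hchooseR
  have hnR : (0 : ℝ) < (n : ℝ) := by exact_mod_cast hn1
  nlinarith [h3, hnR]
end

section
/- Let T be a finite group and k ≥ 4 an integer with k + 1 ≤ |T|. Then Q_k(T) ≤ 1 − P_{k+1}(T), where Q_k(T) is the proportion of k-subsets of T ∖ {1} with non-trivial setwise stabiliser in Aut(T), and P_{k+1}(T) = |{(t₁,...,t_k) ∈ T^k : t₁,...,t_k ∈ T∖{1} are pairwise distinct and the setwise stabiliser of {t₁,...,t_k,1} in Hol(T) is trivial}| / |T|^k. -/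
open Finset Function

namespace Finset

variable {α : Type*}

theorem natCard_add_natCard_not_eq_choose (s : Finset α) (k : ℕ) (q : Finset α → Prop) :
    Nat.card {R : Finset α // ↑R ⊆ (s : Set α) ∧ R.card = k ∧ q R} +
      Nat.card {R : Finset α // ↑R ⊆ (s : Set α) ∧ R.card = k ∧ ¬ q R} = s.card.choose k := by
  classical
  have hcard (r : Finset α → Prop) [DecidablePred r] :
      Nat.card {R : Finset α // ↑R ⊆ (s : Set α) ∧ R.card = k ∧ r R} =
        #((s.powersetCard k).filter r) := by
    rw [← Nat.card_eq_finsetCard]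
    exact Nat.card_congr (Equiv.subtypeEquivRight fun R => by simp [mem_powersetCard, and_assoc])
  rw [hcard, hcard, card_filter_add_card_filter_not, card_powersetCard]

theorem natCard_injective_image_le [Fintype α] [DecidableEq α] (k : ℕ) (p : Finset α → Prop) :
    Nat.card {t : Fin k → α // Injective t ∧ p (univ.image t)} ≤
      Nat.card {R : Finset α // R.card = k ∧ p R} * k.factorial := by
  let Φ : {t : Fin k → α // Injective t ∧ p (univ.image t)} →
      Σ R : {R : Finset α // R.card = k ∧ p R}, Fin k ≃ R.1 := fun t =>
    ⟨⟨univ.image t.1, by rw [card_image_of_injective _ t.2.1, card_fin], t.2.2⟩,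
      Equiv.ofBijective (fun i => ⟨t.1 i, mem_image_of_mem _ (mem_univ i)⟩)
        ⟨fun i j hij => t.2.1 (congrArg Subtype.val hij), fun ⟨x, hx⟩ => by
          obtain ⟨i, -, rfl⟩ := mem_image.1 hx
          exact ⟨i, rfl⟩⟩⟩
  have hΦ : Injective Φ := fun t s h =>
    Subtype.ext (funext fun i => congrArg (fun x => (x.2 i : α)) h)
  calc Nat.card {t : Fin k → α // Injective t ∧ p (univ.image t)}
      ≤ Nat.card (Σ R : {R : Finset α // R.card = k ∧ p R}, Fin k ≃ R.1) :=
        Nat.card_le_card_of_injective Φ hΦ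
    _ = Nat.card {R : Finset α // R.card = k ∧ p R} * k.factorial := by
        classical
        have hperm (R : {R : Finset α // R.card = k ∧ p R}) :
            Nat.card (Fin k ≃ R.1) = k.factorial := by
          rw [Nat.card_eq_fintype_card, Fintype.card_equiv (R.1.equivFinOfCardEq R.2.1).symm,
            Fintype.card_fin]
        rw [Nat.card_sigma, Fintype.sum_congr _ _ hperm, sum_const, card_univ, smul_eq_mul,
          Nat.card_eq_fintype_card]

end Finset

theorem MulAut.eq_one_of_holomorph_stabilizer_trivial {T : Type*} [Group T] {S : Set T}
    (hS : ∀ (g : T) (α : MulAut T),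
      (fun x => α (g⁻¹ * x)) '' (S ∪ {1}) = S ∪ {1} → g = 1 ∧ α = 1)
    {α : MulAut T} (hα : α '' S = S) : α = 1 :=
  (hS 1 α (by simp [Set.image_union, hα])).2

theorem natCard_holomorph_stabilizer_trivial_le {T : Type*} [Group T] [Fintype T] (k : ℕ) :
    Nat.card {t : Fin k → T // Injective t ∧ (∀ i, t i ≠ 1) ∧
        ∀ (g : T) (α : MulAut T),
          (fun x => α (g⁻¹ * x)) '' (Set.range t ∪ {1}) = Set.range t ∪ {1} →
          g = 1 ∧ α = 1} ≤
      Nat.card {R : Finset T // ↑R ⊆ {x : T | x ≠ 1} ∧ R.card = k ∧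
        ¬ ∃ α : MulAut T, α ≠ 1 ∧ α '' ↑R = ↑R} * k.factorial := by
  classical
  refine (Nat.card_le_card_of_injective _ (Subtype.impEmbedding _ _ ?_).injective).trans
    ((natCard_injective_image_le k fun R => ↑R ⊆ {x : T | x ≠ 1} ∧
      ¬ ∃ α : MulAut T, α ≠ 1 ∧ α '' ↑R = ↑R).trans_eq ?_)
  · rintro t ⟨hinj, hne, hhol⟩
    refine ⟨hinj, ?_, ?_⟩
    · intro x hx
      obtain ⟨i, -, rfl⟩ := mem_image.1 hx
      exact hne i
    · rintro ⟨α, hα1, hα⟩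
      exact hα1 (MulAut.eq_one_of_holomorph_stabilizer_trivial hhol (by simpa using hα))
  · exact congrArg (· * _) (Nat.card_congr (Equiv.subtypeEquivRight fun _ => and_left_comm))

theorem div_le_one_sub_div_of_add_eq {a b c d f N : ℕ} (hc : a + d = c) (hb : b ≤ d * f)
    (hN : c * f ≤ N) : (a / c : ℝ) ≤ 1 - b / N := by
  rcases Nat.eq_zero_or_pos c with rfl | hc0
  · obtain ⟨rfl, rfl⟩ : a = 0 ∧ d = 0 := by omega
    obtain rfl : b = 0 := by simpa using hb
    simp
  rcases Nat.eq_zero_or_pos N with rfl | hN0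
  · have hac : (a : ℝ) ≤ c := by exact_mod_cast (by omega : a ≤ c)
    simpa using div_le_one_of_le₀ hac c.cast_nonneg
  have hbd : (b / N : ℝ) ≤ d / c := by
    rw [div_le_div_iff₀ (by exact_mod_cast hN0) (by exact_mod_cast hc0)]
    exact_mod_cast (calc b * c ≤ d * f * c := Nat.mul_le_mul_right c hb
      _ = d * (c * f) := by ring
      _ ≤ d * N := Nat.mul_le_mul_left d hN)
  have hsum : (a / c : ℝ) + d / c = 1 := by
    rw [← add_div, ← Nat.cast_add, hc, div_self (by exact_mod_cast hc0.ne')]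
  linarith

theorem stmt19_general {T : Type*} [Group T] [Fintype T] (k : ℕ) :
    (Nat.card {R : Finset T // ↑R ⊆ {x : T | x ≠ 1} ∧ R.card = k ∧
        ∃ α : MulAut T, α ≠ 1 ∧ α '' ↑R = ↑R} : ℝ) /
      ((Fintype.card T - 1).choose k : ℝ) ≤
    1 - (Nat.card {t : Fin k → T // Function.Injective t ∧ (∀ i, t i ≠ 1) ∧
        ∀ (g : T) (α : MulAut T),
          (fun x => α (g⁻¹ * x)) '' (Set.range t ∪ {1}) = Set.range t ∪ {1} →
          g = 1 ∧ α = 1} : ℝ) / (Fintype.card T : ℝ) ^ k := by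
  classical
  have hsplit := natCard_add_natCard_not_eq_choose (univ.erase (1 : T)) k
    fun R => ∃ α : MulAut T, α ≠ 1 ∧ α '' ↑R = ↑R
  have hS : ((univ.erase (1 : T) : Finset T) : Set T) = {x : T | x ≠ 1} := by ext; simp
  rw [hS, card_erase_of_mem (mem_univ 1), card_univ] at hsplit
  have hchoose : (Fintype.card T - 1).choose k * k.factorial ≤ Fintype.card T ^ k := by
    rw [mul_comm, ← Nat.descFactorial_eq_factorial_mul_choose]
    exact (Nat.descFactorial_le_pow _ _).trans (Nat.pow_le_pow_left (Nat.sub_le _ _) _)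
  simpa only [Nat.cast_pow] using div_le_one_sub_div_of_add_eq hsplit
    (natCard_holomorph_stabilizer_trivial_le k) hchoose

/-- For `k ≥ 4` with `k + 1 ≤ |T|`: `Q_k(T) ≤ 1 - P_{k+1}(T)`, where `Q_k(T)` is
the proportion of `k`-subsets of `T ∖ {1}` with non-trivial setwise stabiliser in
`Aut(T)`, and `P_{k+1}(T)` is the proportion of tuples `(t₁,…,t_k) ∈ T^k` of
pairwise distinct non-identity elements such that `{t₁,…,t_k,1}` has trivial
setwise stabiliser in `Hol(T)`. -/
theorem stmt19 {T : Type*} [Group T] [Fintype T] [DecidableEq T] (k : ℕ)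
    (hk : 4 ≤ k) (hk2 : k + 1 ≤ Fintype.card T) :
    (Nat.card {R : Finset T // ↑R ⊆ {x : T | x ≠ 1} ∧ R.card = k ∧
        ∃ α : MulAut T, α ≠ 1 ∧ α '' ↑R = ↑R} : ℝ) /
      ((Fintype.card T - 1).choose k : ℝ) ≤
    1 - (Nat.card {t : Fin k → T // Function.Injective t ∧ (∀ i, t i ≠ 1) ∧
        ∀ (g : T) (α : MulAut T),
          (fun x => α (g⁻¹ * x)) '' (Set.range t ∪ {1}) = Set.range t ∪ {1} →
          g = 1 ∧ α = 1} : ℝ) / (Fintype.card T : ℝ) ^ k :=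
  stmt19_general k
end
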